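/- arXiv:2603.14230 — 6 statements merged into one kernel-verified Lean document; each statement's English description precedes it below -/
import Mathlib

section
/- Fix an integer N ≥ 1, an N×N real symmetric matrix M, a real s ≥ 1, and z = E + iη with η > 0. For v ∈ ℝ^N let S(v) = (M + diag(v) − z·Id)^{−1} (a complex matrix; the inverse exists since M + diag(v) is real symmetric and η > 0), and define F_s(v) = (1/N)·∑_{i=1}^N (Im S(v)_{ii})^s. Then F_s is Lipschitz on ℝ^N with respect to the Euclidean norm, with Lipschitz constant s/(η^{s+1}·√N). -/
/-! For Hermitian `H` and `Im z = η > 0` the resolvent `G = (H - z)⁻¹` satisfies the Ward identity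
`G - Gᴴ = (z - z̄) G Gᴴ`, i.e. `Im G_ii = η ∑_k |G_ik|²`. Since `|G_ii| ≥ Im G_ii`, this gives
`0 ≤ Im G_ii ≤ 1/η` and row bounds `∑_k |G_ik|² ≤ 1/η²`. Moving the diagonal from `v` to `w` changes
`G` by `G_v diag(w - v) G_w` (resolvent identity), so Cauchy–Schwarz against the rows of `G_v` and
`G_w` bounds `∑_i |G_v ii - G_w ii|` by `√N ‖v - w‖ / η²`. Finally `x ↦ x ^ s` is
`s η^(1-s)`-Lipschitz on `[0, 1/η]`. -/

theorem abs_rpow_sub_rpow_le {s c x y : ℝ} (hs : 1 ≤ s) (hx : x ∈ Set.Icc 0 c)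
    (hy : y ∈ Set.Icc 0 c) : |x ^ s - y ^ s| ≤ s * c ^ (s - 1) * |x - y| := by
  have hderiv : ∀ t ∈ Set.Icc 0 c,
      HasDerivWithinAt (fun u : ℝ => u ^ s) (s * t ^ (s - 1)) (Set.Icc 0 c) t :=
    fun t _ => (Real.hasDerivAt_rpow_const (Or.inr hs)).hasDerivWithinAt
  have hbound : ∀ t ∈ Set.Icc 0 c, ‖s * t ^ (s - 1)‖ ≤ s * c ^ (s - 1) := by
    intro t ht
    rw [Real.norm_of_nonneg (by have := ht.1; positivity)]
    exact mul_le_mul_of_nonneg_left (Real.rpow_le_rpow ht.1 ht.2 (by linarith)) (by linarith)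
  simpa only [Real.norm_eq_abs] using
    (convex_Icc 0 c).norm_image_sub_le_of_norm_hasDerivWithin_le hderiv hbound hy hx

namespace Matrix

variable {n : Type*} [Fintype n] [DecidableEq n]

section CauchySchwarz

variable {𝕜 : Type*} [RCLike 𝕜]

theorem norm_mul_diagonal_mul_apply_self_sq_le (P Q : Matrix n n 𝕜) (d : n → 𝕜) (i : n) :
    ‖(P * diagonal d * Q) i i‖ ^ 2 ≤ (∑ k, ‖P i k‖ ^ 2) * ∑ k, ‖d k‖ ^ 2 * ‖Q k i‖ ^ 2 := by
  have hentry : ‖(P * diagonal d * Q) i i‖ ≤ ∑ k, ‖P i k‖ * (‖d k‖ * ‖Q k i‖) := by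
    rw [mul_apply]
    simp only [mul_diagonal]
    refine (norm_sum_le _ _).trans_eq (Finset.sum_congr rfl fun k _ => ?_)
    rw [norm_mul, norm_mul, mul_assoc]
  calc ‖(P * diagonal d * Q) i i‖ ^ 2 ≤ (∑ k, ‖P i k‖ * (‖d k‖ * ‖Q k i‖)) ^ 2 := by gcongr
    _ ≤ (∑ k, ‖P i k‖ ^ 2) * ∑ k, (‖d k‖ * ‖Q k i‖) ^ 2 := Finset.sum_mul_sq_le_sq_mul_sq _ _ _
    _ = (∑ k, ‖P i k‖ ^ 2) * ∑ k, ‖d k‖ ^ 2 * ‖Q k i‖ ^ 2 := by simp only [mul_pow]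

theorem sum_norm_mul_diagonal_mul_apply_self_le {P Q : Matrix n n 𝕜} {a b : ℝ} (d : n → 𝕜)
    (hP : ∀ i, ∑ k, ‖P i k‖ ^ 2 ≤ a ^ 2) (hQ : ∀ i, ∑ k, ‖Q i k‖ ^ 2 ≤ b ^ 2) (ha : 0 ≤ a)
    (hb : 0 ≤ b) :
    ∑ i, ‖(P * diagonal d * Q) i i‖ ≤ √(Fintype.card n) * (a * b * √(∑ k, ‖d k‖ ^ 2)) := by
  have hsq : ∑ i, ‖(P * diagonal d * Q) i i‖ ^ 2 ≤ (a * b * √(∑ k, ‖d k‖ ^ 2)) ^ 2 := by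
    calc ∑ i, ‖(P * diagonal d * Q) i i‖ ^ 2
        ≤ ∑ i, a ^ 2 * ∑ k, ‖d k‖ ^ 2 * ‖Q k i‖ ^ 2 := by
          gcongr with i
          exact (norm_mul_diagonal_mul_apply_self_sq_le P Q d i).trans
            (mul_le_mul_of_nonneg_right (hP i) (by positivity))
      _ = a ^ 2 * ∑ k, ‖d k‖ ^ 2 * ∑ i, ‖Q k i‖ ^ 2 := by
          simp only [Finset.mul_sum]
          rw [Finset.sum_comm]
      _ ≤ a ^ 2 * ∑ k, ‖d k‖ ^ 2 * b ^ 2 := by gcongr with k; exact hQ k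
      _ = (a * b * √(∑ k, ‖d k‖ ^ 2)) ^ 2 := by
          rw [mul_pow, mul_pow, Real.sq_sqrt (by positivity), ← Finset.sum_mul]; ring
  calc ∑ i, ‖(P * diagonal d * Q) i i‖
      ≤ √(Fintype.card n * ∑ i, ‖(P * diagonal d * Q) i i‖ ^ 2) :=
        Real.le_sqrt_of_sq_le (sq_sum_le_card_mul_sum_sq.trans_eq (by rw [Finset.card_univ]))
    _ ≤ √(Fintype.card n * (a * b * √(∑ k, ‖d k‖ ^ 2)) ^ 2) := by gcongr
    _ = √(Fintype.card n) * (a * b * √(∑ k, ‖d k‖ ^ 2)) := by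
        rw [Real.sqrt_mul (Nat.cast_nonneg _), Real.sqrt_sq (by positivity)]

end CauchySchwarz

variable {z : ℂ}

namespace IsHermitian

variable {H : Matrix n n ℂ}

theorem isUnit_sub_smul_one (hH : H.IsHermitian) (hz : z.im ≠ 0) : IsUnit (H - z • 1) := by
  have hspec : z ∉ spectrum ℂ H := by
    rw [hH.spectrum_eq_image_range]
    rintro ⟨r, -, rfl⟩
    exact hz (Complex.ofReal_im r)
  rw [spectrum.notMem_iff, Algebra.algebraMap_eq_smul_one] at hspec
  simpa using hspec.neg

theorem inv_sub_smul_one_sub_conjTranspose (hH : H.IsHermitian) (hz : z.im ≠ 0) :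
    (H - z • 1)⁻¹ - (H - z • 1)⁻¹ᴴ = (z - star z) • ((H - z • 1)⁻¹ * (H - z • 1)⁻¹ᴴ) := by
  have hconj : (H - z • 1)ᴴ = H - star z • 1 := by
    rw [conjTranspose_sub, conjTranspose_smul, conjTranspose_one, hH.eq]
  have hunit : IsUnit (H - z • 1) ↔ IsUnit (H - star z • 1) :=
    iff_of_true (hH.isUnit_sub_smul_one hz) (hH.isUnit_sub_smul_one (by simpa using hz))
  rw [conjTranspose_nonsing_inv, hconj, inv_sub_inv hunit, sub_sub_sub_cancel_left, ← sub_smul,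
    Matrix.mul_smul, Matrix.mul_one, Matrix.smul_mul]

theorem im_inv_sub_smul_one_apply_self (hH : H.IsHermitian) (hz : z.im ≠ 0) (i : n) :
    ((H - z • 1)⁻¹ i i).im = z.im * ∑ k, ‖(H - z • 1)⁻¹ i k‖ ^ 2 := by
  have h := congrArg Complex.im (congrFun (congrFun (hH.inv_sub_smul_one_sub_conjTranspose hz) i) i)
  have hsum : ∑ k, (H - z • 1)⁻¹ i k * star ((H - z • 1)⁻¹ i k)
      = ((∑ k, ‖(H - z • 1)⁻¹ i k‖ ^ 2 : ℝ) : ℂ) := by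
    push_cast
    exact Finset.sum_congr rfl fun k _ => Complex.mul_conj' _
  simp only [sub_apply, conjTranspose_apply, smul_apply, mul_apply, smul_eq_mul] at h
  rw [hsum] at h
  simp only [Complex.sub_im, Complex.mul_im, Complex.ofReal_re, Complex.ofReal_im,
    Complex.star_def, Complex.conj_im] at h
  linarith

theorem im_inv_sub_smul_one_apply_self_mem_Icc (hH : H.IsHermitian) (hz : 0 < z.im) (i : n) :
    ((H - z • 1)⁻¹ i i).im ∈ Set.Icc 0 z.im⁻¹ := by
  set x := ((H - z • 1)⁻¹ i i).im
  have hx : x = z.im * ∑ k, ‖(H - z • 1)⁻¹ i k‖ ^ 2 := hH.im_inv_sub_smul_one_apply_self hz.ne' i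
  have hx₀ : 0 ≤ x := hx ▸ by positivity
  have hxx : z.im * x ^ 2 ≤ x := by
    calc z.im * x ^ 2 ≤ z.im * ‖(H - z • 1)⁻¹ i i‖ ^ 2 := by
          gcongr; exact (le_abs_self _).trans (Complex.abs_im_le_norm _)
      _ ≤ x := by
          rw [hx]
          gcongr
          exact Finset.single_le_sum (f := fun k => ‖(H - z • 1)⁻¹ i k‖ ^ 2)
            (fun k _ => by positivity) (Finset.mem_univ i)
  refine ⟨hx₀, ?_⟩
  by_contra! hlt
  have hx₁ : 1 < z.im * x := by rwa [inv_lt_iff_one_lt_mul₀' hz] at hlt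
  nlinarith

theorem sum_norm_inv_sub_smul_one_apply_sq_le (hH : H.IsHermitian) (hz : 0 < z.im) (i : n) :
    ∑ k, ‖(H - z • 1)⁻¹ i k‖ ^ 2 ≤ z.im⁻¹ ^ 2 := by
  have h := (hH.im_inv_sub_smul_one_apply_self_mem_Icc hz i).2
  rw [hH.im_inv_sub_smul_one_apply_self hz.ne' i, ← le_div_iff₀' hz] at h
  simpa [sq, div_eq_mul_inv] using h

end IsHermitian

theorem sum_norm_inv_sub_smul_one_apply_self_sub_le {H₁ H₂ : Matrix n n ℂ} (hH₁ : H₁.IsHermitian)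
    (hH₂ : H₂.IsHermitian) (hz : 0 < z.im) {d : n → ℂ} (hd : H₂ - H₁ = diagonal d) :
    ∑ i, ‖(H₁ - z • 1)⁻¹ i i - (H₂ - z • 1)⁻¹ i i‖
      ≤ √(Fintype.card n) * (z.im⁻¹ * z.im⁻¹ * √(∑ k, ‖d k‖ ^ 2)) := by
  have hunit : IsUnit (H₁ - z • 1) ↔ IsUnit (H₂ - z • 1) :=
    iff_of_true (hH₁.isUnit_sub_smul_one hz.ne') (hH₂.isUnit_sub_smul_one hz.ne')
  simp_rw [← sub_apply, inv_sub_inv hunit, sub_sub_sub_cancel_right, hd]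
  exact sum_norm_mul_diagonal_mul_apply_self_le d (hH₁.sum_norm_inv_sub_smul_one_apply_sq_le hz)
    (hH₂.sum_norm_inv_sub_smul_one_apply_sq_le hz) (by positivity) (by positivity)

theorem abs_sum_im_rpow_inv_sub_smul_one_apply_self_sub_le {H₁ H₂ : Matrix n n ℂ}
    (hH₁ : H₁.IsHermitian) (hH₂ : H₂.IsHermitian) (hz : 0 < z.im) {d : n → ℂ}
    (hd : H₂ - H₁ = diagonal d) {s : ℝ} (hs : 1 ≤ s) :
    |∑ i, ((H₁ - z • 1)⁻¹ i i).im ^ s - ∑ i, ((H₂ - z • 1)⁻¹ i i).im ^ s|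
      ≤ s * z.im⁻¹ ^ (s - 1) * (√(Fintype.card n) * (z.im⁻¹ * z.im⁻¹ * √(∑ k, ‖d k‖ ^ 2))) := by
  calc _ ≤ ∑ i, |((H₁ - z • 1)⁻¹ i i).im ^ s - ((H₂ - z • 1)⁻¹ i i).im ^ s| := by
        rw [← Finset.sum_sub_distrib]; exact Finset.abs_sum_le_sum_abs _ _
    _ ≤ ∑ i, s * z.im⁻¹ ^ (s - 1) * ‖(H₁ - z • 1)⁻¹ i i - (H₂ - z • 1)⁻¹ i i‖ := by
        gcongr with i
        refine (abs_rpow_sub_rpow_le hs (hH₁.im_inv_sub_smul_one_apply_self_mem_Icc hz i)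
          (hH₂.im_inv_sub_smul_one_apply_self_mem_Icc hz i)).trans ?_
        gcongr
        simpa using Complex.abs_im_le_norm ((H₁ - z • 1)⁻¹ i i - (H₂ - z • 1)⁻¹ i i)
    _ ≤ _ := by
        rw [← Finset.mul_sum]
        gcongr
        exact sum_norm_inv_sub_smul_one_apply_self_sub_le hH₁ hH₂ hz hd

end Matrix

open Matrix
open scoped Real

noncomputable section

/-- The resolvent `S(v) = (M + diag(v) - z)⁻¹` as a complex matrix. -/
def resS {N : ℕ} (M : Matrix (Fin N) (Fin N) ℝ) (z : ℂ) (v : Fin N → ℝ) :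
    Matrix (Fin N) (Fin N) ℂ :=
  (((M + Matrix.diagonal v).map (fun x => (x : ℂ))) - z • 1)⁻¹

theorem stmt7_general (N : ℕ) (M : Matrix (Fin N) (Fin N) ℝ) (hM : M.IsSymm)
    (s : ℝ) (hs : 1 ≤ s) (E η : ℝ) (hη : 0 < η) :
    ∀ v w : EuclideanSpace ℝ (Fin N),
      |(1 / (N : ℝ)) * ∑ i, (resS M (E + η * Complex.I) (fun i => v i) i i).im ^ s -
          (1 / (N : ℝ)) * ∑ i, (resS M (E + η * Complex.I) (fun i => w i) i i).im ^ s| ≤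
        s / (η ^ (s + 1) * Real.sqrt N) * ‖v - w‖ := by
  intro v w
  set z : ℂ := E + η * Complex.I
  have hz : z.im = η := by simp [z]
  have hHerm (u : Fin N → ℝ) : ((M + diagonal u).map ((↑) : ℝ → ℂ)).IsHermitian :=
    (isHermitian_iff_isSymm.mpr (hM.add (isSymm_diagonal u))).map _ fun _ => by simp
  have hd : (M + diagonal fun i => w i).map ((↑) : ℝ → ℂ) - (M + diagonal fun i => v i).map (↑)
      = diagonal fun k => ((w k - v k : ℝ) : ℂ) := by
    ext i j
    rcases eq_or_ne i j with rfl | hij <;> simp [diagonal_apply_ne, *]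
  have hnorm : √(∑ k, ‖((w k - v k : ℝ) : ℂ)‖ ^ 2) = ‖v - w‖ := by
    simp only [Complex.norm_real, EuclideanSpace.norm_eq, PiLp.sub_apply, norm_sub_rev]
  have hsum := abs_sum_im_rpow_inv_sub_smul_one_apply_self_sub_le (hHerm _) (hHerm _)
    (hz ▸ hη) hd hs
  rw [hz, hnorm, Fintype.card_fin] at hsum
  calc _ = 1 / (N : ℝ) * |∑ i, (resS M z (fun i => v i) i i).im ^ s
            - ∑ i, (resS M z (fun i => w i) i i).im ^ s| := by
        rw [← mul_sub, abs_mul, abs_of_nonneg (by positivity)]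
    _ ≤ 1 / (N : ℝ) * (s * η⁻¹ ^ (s - 1) * (√N * (η⁻¹ * η⁻¹ * ‖v - w‖))) := by gcongr; exact hsum
    _ = √N / N * (s * η⁻¹ ^ (s - 1) * η⁻¹ * η⁻¹) * ‖v - w‖ := by ring
    _ = s / (η ^ (s + 1) * √N) * ‖v - w‖ := by
        rw [Real.sqrt_div_self', Real.inv_rpow hη.le, Real.rpow_sub_one hη.ne',
          Real.rpow_add_one hη.ne']
        field_simp

theorem stmt7 (N : ℕ) (hN : 1 ≤ N) (M : Matrix (Fin N) (Fin N) ℝ) (hM : M.IsSymm)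
    (s : ℝ) (hs : 1 ≤ s) (E η : ℝ) (hη : 0 < η) :
    ∀ v w : EuclideanSpace ℝ (Fin N),
      |(1 / (N : ℝ)) * ∑ i, (resS M (E + η * Complex.I) (fun i => v i) i i).im ^ s -
          (1 / (N : ℝ)) * ∑ i, (resS M (E + η * Complex.I) (fun i => w i) i i).im ^ s| ≤
        s / (η ^ (s + 1) * Real.sqrt N) * ‖v - w‖ :=
  stmt7_general N M hM s hs E η hη
end
end

section
/- Fix an integer N ≥ 1, an N×N real symmetric matrix M, s ∈ (0,1), z = E + iη with η > 0, and δ ∈ (0, η^{−1}]. For v ∈ ℝ^N let S(v) = (M + diag(v) − z·Id)^{−1}, and define F_{s,δ}(v) = (1/N)·∑_{i=1}^N (max(Im S(v)_{ii}, δ))^s. Then F_{s,δ} is Lipschitz on ℝ^N with respect to the Euclidean norm, with Lipschitz constant (s·δ^{s−1})/(η²·√N). -/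
/-!
Write `H = M + diag v` and `G(v) = (H - z)⁻¹`. Since `H` is Hermitian,
`Im ⟪x, (H - z) x⟫ = -η ‖x‖²`, so `‖(H - z) x‖ ≥ η ‖x‖` and every column of `G(v)` has
Euclidean norm at most `1/η`; as `H` is real symmetric, `G(v)` is complex symmetric and the
same holds for its rows. The resolvent identity
`G(v) - G(w) = G(v) diag(w - v) G(w)` and Cauchy–Schwarz then give
`∑ᵢ |Im G(v)ᵢᵢ - Im G(w)ᵢᵢ| ≤ η⁻² ‖v - w‖₁ ≤ η⁻² √N ‖v - w‖₂`.
Finally `t ↦ max(t, δ)^s` is `s δ^(s-1)`-Lipschitz because `t ↦ t^s` has derivative at most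
`s δ^(s-1)` on `[δ, ∞)`.
-/

open Matrix
open scoped Real

noncomputable section

open WithLp
open scoped InnerProductSpace

namespace Matrix

lemma IsSymm.isHermitian_map_ofReal {n : Type*} {A : Matrix n n ℝ} (hA : A.IsSymm) :
    (A.map (fun x => (x : ℂ))).IsHermitian :=
  (isHermitian_iff_isSymm.2 hA).map _ fun _ => by simp

variable {n : Type*} [Fintype n] [DecidableEq n]

lemma IsHermitian.abs_im_mul_norm_le_norm_mulVec {A : Matrix n n ℂ} (hA : A.IsHermitian)
    (ζ : ℂ) (x : EuclideanSpace ℂ n) :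
    |ζ.im| * ‖x‖ ≤ ‖toLp 2 ((A - ζ • 1) *ᵥ ofLp x)‖ := by
  set y := toLp 2 ((A - ζ • 1) *ᵥ ofLp x)
  have him : (⟪x, y⟫_ℂ).im = -ζ.im * ‖x‖ ^ 2 := by
    have hy : y = toLp 2 (A *ᵥ ofLp x) - ζ • x := by
      simp [y, sub_mulVec, smul_mulVec, one_mulVec]
    rw [hy, inner_sub_right, inner_smul_right, inner_self_eq_norm_sq_to_K,
      EuclideanSpace.inner_eq_star_dotProduct, dotProduct_comm]
    have := hA.im_star_dotProduct_mulVec_self (ofLp x)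
    simp only [RCLike.im_to_complex] at this
    simp [this, Complex.mul_im, ← Complex.ofReal_pow]
  have hCS : |ζ.im| * ‖x‖ ^ 2 ≤ ‖x‖ * ‖y‖ := by
    calc |ζ.im| * ‖x‖ ^ 2 = |(⟪x, y⟫_ℂ).im| := by
          rw [him, abs_mul, abs_neg, abs_of_nonneg (sq_nonneg ‖x‖)]
      _ ≤ ‖⟪x, y⟫_ℂ‖ := Complex.abs_im_le_norm _
      _ ≤ ‖x‖ * ‖y‖ := norm_inner_le_norm x y
  rcases (norm_nonneg x).eq_or_lt with hx | hx
  · rw [← hx, mul_zero]; exact norm_nonneg y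
  · nlinarith

lemma IsHermitian.isUnit_det_sub_smul_one {A : Matrix n n ℂ} (hA : A.IsHermitian) {ζ : ℂ}
    (hζ : ζ.im ≠ 0) : IsUnit (A - ζ • 1).det := by
  rw [isUnit_iff_ne_zero]
  intro hdet
  obtain ⟨x, hx0, hx⟩ := exists_mulVec_eq_zero_iff.2 hdet
  have := hA.abs_im_mul_norm_le_norm_mulVec ζ (toLp 2 x)
  simp only [hx, toLp_zero, norm_zero] at this
  have : ‖toLp 2 x‖ = 0 := by
    nlinarith [norm_nonneg (toLp 2 x), abs_pos.2 hζ]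
  exact hx0 (by simpa using this)

lemma IsHermitian.norm_col_inv_sub_smul_one_le {A : Matrix n n ℂ} (hA : A.IsHermitian) {ζ : ℂ}
    (hζ : ζ.im ≠ 0) (k : n) : ‖toLp 2 ((A - ζ • 1)⁻¹.col k)‖ ≤ |ζ.im|⁻¹ := by
  have h := hA.abs_im_mul_norm_le_norm_mulVec ζ (toLp 2 ((A - ζ • 1)⁻¹ *ᵥ Pi.single k 1))
  rw [ofLp_toLp, mulVec_mulVec, mul_nonsing_inv _ (hA.isUnit_det_sub_smul_one hζ),
    one_mulVec] at h
  rw [← mulVec_single_one, inv_eq_one_div |ζ.im|, le_div_iff₀' (abs_pos.2 hζ)]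
  simpa using h

end Matrix

lemma abs_rpow_sub_rpow_le_of_le {s δ x y : ℝ} (hs0 : 0 ≤ s) (hs1 : s ≤ 1) (hδ : 0 < δ)
    (hx : δ ≤ x) (hy : δ ≤ y) : |x ^ s - y ^ s| ≤ s * δ ^ (s - 1) * |x - y| := by
  have hderiv : ∀ t ∈ Set.Ici δ, HasDerivWithinAt (· ^ s) (s * t ^ (s - 1)) (Set.Ici δ) t :=
    fun t ht => (Real.hasDerivAt_rpow_const (Or.inl (hδ.trans_le ht).ne')).hasDerivWithinAt
  have hbound : ∀ t ∈ Set.Ici δ, ‖s * t ^ (s - 1)‖ ≤ s * δ ^ (s - 1) := fun t ht => by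
    rw [Real.norm_of_nonneg (by have := hδ.trans_le ht; positivity)]
    exact mul_le_mul_of_nonneg_left
      (Real.rpow_le_rpow_of_nonpos hδ ht (by linarith)) hs0
  simpa [Real.norm_eq_abs] using
    (convex_Ici δ).norm_image_sub_le_of_norm_hasDerivWithin_le hderiv hbound hy hx

lemma abs_max_rpow_sub_max_rpow_le {s δ : ℝ} (hs0 : 0 ≤ s) (hs1 : s ≤ 1) (hδ : 0 < δ)
    (a b : ℝ) : |max a δ ^ s - max b δ ^ s| ≤ s * δ ^ (s - 1) * |a - b| :=
  (abs_rpow_sub_rpow_le_of_le hs0 hs1 hδ (le_max_right a δ) (le_max_right b δ)).trans <|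
    mul_le_mul_of_nonneg_left (abs_max_sub_max_le_abs a b δ) (by positivity)

lemma EuclideanSpace.sum_abs_le_sqrt_card_mul_norm {ι : Type*} [Fintype ι]
    (x : EuclideanSpace ℝ ι) : ∑ i, |x i| ≤ √(Fintype.card ι) * ‖x‖ := by
  rw [EuclideanSpace.norm_eq, ← Real.sqrt_mul (Nat.cast_nonneg _)]
  refine Real.le_sqrt_of_sq_le ?_
  simpa using sq_sum_le_card_mul_sum_sq (s := Finset.univ) (f := fun i => |x i|)

section Resolvent

variable {N : ℕ} {M : Matrix (Fin N) (Fin N) ℝ} {z : ℂ}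

lemma resS_transpose (hM : M.IsSymm) (v : Fin N → ℝ) : (resS M z v)ᵀ = resS M z v := by
  rw [resS, transpose_nonsing_inv, transpose_sub, ← transpose_map,
    (hM.add (isSymm_diagonal v)).eq, transpose_smul, transpose_one]

lemma resS_sub_resS (hM : M.IsSymm) (hz : z.im ≠ 0) (v w : Fin N → ℝ) :
    resS M z v - resS M z w =
      resS M z v * diagonal (fun k => ((w k - v k : ℝ) : ℂ)) * resS M z w := by
  have hv := (hM.add (isSymm_diagonal v)).isHermitian_map_ofReal.isUnit_det_sub_smul_one hz
  have hw := (hM.add (isSymm_diagonal w)).isHermitian_map_ofReal.isUnit_det_sub_smul_one hz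
  rw [resS, resS, Matrix.inv_sub_inv (iff_of_true
    ((isUnit_iff_isUnit_det _).2 hv) ((isUnit_iff_isUnit_det _).2 hw))]
  congr 2
  ext i j
  by_cases h : i = j
  · subst h; simp
  · simp [h]

lemma sum_norm_resS_mul_norm_resS_le (hM : M.IsSymm) (hz : z.im ≠ 0) (v w : Fin N → ℝ)
    (k : Fin N) : ∑ i, ‖resS M z v i k‖ * ‖resS M z w k i‖ ≤ (z.im ^ 2)⁻¹ := by
  have hcol := fun u =>
    (hM.add (isSymm_diagonal u)).isHermitian_map_ofReal.norm_col_inv_sub_smul_one_le hz k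
  calc ∑ i, ‖resS M z v i k‖ * ‖resS M z w k i‖
      ≤ ‖toLp 2 ((resS M z v).col k)‖ * ‖toLp 2 ((resS M z w).col k)‖ := by
        have hsymm : ∀ i, resS M z w k i = resS M z w i k := fun i =>
          congrFun (congrFun (resS_transpose hM w) i) k
        simp only [EuclideanSpace.norm_eq, col_apply, hsymm]
        exact Real.sum_mul_le_sqrt_mul_sqrt _ _ _
    _ ≤ |z.im|⁻¹ * |z.im|⁻¹ := mul_le_mul (hcol v) (hcol w) (norm_nonneg _) (by positivity)
    _ = (z.im ^ 2)⁻¹ := by rw [← mul_inv, abs_mul_abs_self, sq]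

lemma sum_abs_im_resS_sub_le (hM : M.IsSymm) (hz : z.im ≠ 0) (v w : Fin N → ℝ) :
    ∑ i, |(resS M z v i i).im - (resS M z w i i).im| ≤
      (z.im ^ 2)⁻¹ * ∑ k, |v k - w k| := by
  have hentry : ∀ i, resS M z v i i - resS M z w i i =
      ∑ k, resS M z v i k * ((w k - v k : ℝ) : ℂ) * resS M z w k i := fun i => by
    rw [← Matrix.sub_apply, resS_sub_resS hM hz, mul_apply]
    simp [mul_diagonal]
  calc ∑ i, |(resS M z v i i).im - (resS M z w i i).im|
      ≤ ∑ i, ∑ k, |v k - w k| * (‖resS M z v i k‖ * ‖resS M z w k i‖) := by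
        gcongr with i
        rw [← Complex.sub_im, hentry]
        refine (Complex.abs_im_le_norm _).trans ((norm_sum_le _ _).trans_eq ?_)
        simp only [norm_mul, Complex.norm_real, Real.norm_eq_abs, abs_sub_comm (w _)]
        exact Finset.sum_congr rfl fun k _ => by ring
    _ = ∑ k, |v k - w k| * ∑ i, ‖resS M z v i k‖ * ‖resS M z w k i‖ := by
        rw [Finset.sum_comm]
        simp only [Finset.mul_sum]
    _ ≤ ∑ k, |v k - w k| * (z.im ^ 2)⁻¹ := by
        gcongr with k
        exact sum_norm_resS_mul_norm_resS_le hM hz v w k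
    _ = (z.im ^ 2)⁻¹ * ∑ k, |v k - w k| := by rw [← Finset.sum_mul, mul_comm]

end Resolvent

theorem stmt8_general (N : ℕ) (M : Matrix (Fin N) (Fin N) ℝ) (hM : M.IsSymm)
    (s : ℝ) (hs : s ∈ Set.Ioo (0 : ℝ) 1) (E η : ℝ) (hη : 0 < η)
    (δ : ℝ) (hδ : δ ∈ Set.Ioc (0 : ℝ) η⁻¹) :
    ∀ v w : EuclideanSpace ℝ (Fin N),
      |(1 / (N : ℝ)) *
            ∑ i, max (resS M (E + η * Complex.I) (fun i => v i) i i).im δ ^ s -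
          (1 / (N : ℝ)) *
            ∑ i, max (resS M (E + η * Complex.I) (fun i => w i) i i).im δ ^ s| ≤
        s * δ ^ (s - 1) / (η ^ 2 * Real.sqrt N) * ‖v - w‖ := by
  intro v w
  set z : ℂ := E + η * Complex.I
  have hz : z.im = η := by simp [z]
  obtain ⟨hs0, hs1⟩ := hs
  obtain ⟨hδ0, -⟩ := hδ
  set G := fun (u : EuclideanSpace ℝ (Fin N)) i => (resS M z (fun i => u i) i i).im
  have hmax : |∑ i, max (G v i) δ ^ s - ∑ i, max (G w i) δ ^ s| ≤
      s * δ ^ (s - 1) * ∑ i, |G v i - G w i| := by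
    rw [← Finset.sum_sub_distrib, Finset.mul_sum]
    exact (Finset.abs_sum_le_sum_abs _ _).trans <| Finset.sum_le_sum fun i _ =>
      abs_max_rpow_sub_max_rpow_le hs0.le hs1.le hδ0 _ _
  have hres : ∑ i, |G v i - G w i| ≤ (η ^ 2)⁻¹ * (√N * ‖v - w‖) := by
    refine (hz ▸ sum_abs_im_resS_sub_le hM (hz ▸ hη.ne') _ _).trans ?_
    gcongr
    simpa using EuclideanSpace.sum_abs_le_sqrt_card_mul_norm (v - w)
  calc |1 / (N : ℝ) * ∑ i, max (G v i) δ ^ s - 1 / (N : ℝ) * ∑ i, max (G w i) δ ^ s|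
      = 1 / N * |∑ i, max (G v i) δ ^ s - ∑ i, max (G w i) δ ^ s| := by
        rw [← mul_sub, abs_mul, abs_of_nonneg (by positivity)]
    _ ≤ 1 / N * (s * δ ^ (s - 1) * ((η ^ 2)⁻¹ * (√N * ‖v - w‖))) := by
        gcongr
        exact hmax.trans (by gcongr)
    _ = s * δ ^ (s - 1) * (η ^ 2)⁻¹ * (√N / N) * ‖v - w‖ := by ring
    _ = s * δ ^ (s - 1) / (η ^ 2 * √N) * ‖v - w‖ := by rw [Real.sqrt_div_self']; ring

theorem stmt8 (N : ℕ) (hN : 1 ≤ N) (M : Matrix (Fin N) (Fin N) ℝ) (hM : M.IsSymm)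
    (s : ℝ) (hs : s ∈ Set.Ioo (0 : ℝ) 1) (E η : ℝ) (hη : 0 < η)
    (δ : ℝ) (hδ : δ ∈ Set.Ioc (0 : ℝ) η⁻¹) :
    ∀ v w : EuclideanSpace ℝ (Fin N),
      |(1 / (N : ℝ)) *
            ∑ i, max (resS M (E + η * Complex.I) (fun i => v i) i i).im δ ^ s -
          (1 / (N : ℝ)) *
            ∑ i, max (resS M (E + η * Complex.I) (fun i => w i) i i).im δ ^ s| ≤
        s * δ ^ (s - 1) / (η ^ 2 * Real.sqrt N) * ‖v - w‖ :=
  stmt8_general N M hM s hs E η hη δ hδ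
end
end

section
/- Fix an integer N ≥ 1, t > 0, z = E + iη with η > 0, and v ∈ ℝ^N. Let M and M' be N×N real symmetric matrices such that Δ = M' − M has rank at most 4 and ℓ²→ℓ² operator norm at most 8t. Set S = (M + diag(v) − z·Id)^{−1} and S' = (M' + diag(v) − z·Id)^{−1}. Then: (i) (1/N)·∑_{i=1}^N |S'_{ii} − S_{ii}| ≤ 32t/(N·η²); (ii) for every real s ≥ 1, |(1/N)·∑_i (Im S'_{ii})^s − (1/N)·∑_i (Im S_{ii})^s| ≤ 32·s·t/(N·η^{s+1}); (iii) for every s ∈ (0,1) and δ ∈ (0, η^{−1}], |(1/N)·∑_i (max(Im S'_{ii},δ))^s − (1/N)·∑_i (max(Im S_{ii},δ))^s| ≤ 32·s·t·δ^{s−1}/(N·η²). -/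
open Matrix
open scoped Real

noncomputable section

/-! The resolvent identity gives `S' - S = -S' Δ S`. Expanding `Δ = ∑ₖ uₖ (Δ uₖ)ᵀ` over an
orthonormal basis `(uₖ)` of its range (at most four vectors) and using `Sᵀ = S`, the diagonal of
`S' Δ S` is `∑ₖ (S' uₖ)ᵢ (S Δ uₖ)ᵢ`, whose ℓ¹ norm is at most `‖S' uₖ‖ ‖S Δ uₖ‖ ≤ 8t / η²` per term
by Cauchy–Schwarz and `‖(H - z)⁻¹‖ ≤ 1 / Im z` for Hermitian `H`. Since `Im Sᵢᵢ ∈ [0, η⁻¹]`, parts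
(ii) and (iii) follow from (i): `x ↦ x ^ s` is Lipschitz on `[0, η⁻¹]` with constant
`s η^(1 - s)` for `s ≥ 1`, and `x ↦ max x δ ^ s` is Lipschitz with constant `s δ^(s - 1)` for
`s ≤ 1`. -/

open Finset

theorem abs_rpow_sub_rpow_le_of_one_le {p c a b : ℝ} (hp : 1 ≤ p) (ha : a ∈ Set.Icc 0 c)
    (hb : b ∈ Set.Icc 0 c) : |a ^ p - b ^ p| ≤ p * c ^ (p - 1) * |a - b| := by
  have hderiv : ∀ x ∈ Set.Icc 0 c,
      HasDerivWithinAt (fun x : ℝ => x ^ p) (p * x ^ (p - 1)) (Set.Icc 0 c) x :=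
    fun x _ => (Real.hasDerivAt_rpow_const (Or.inr hp)).hasDerivWithinAt
  have hbound : ∀ x ∈ Set.Icc 0 c, ‖p * x ^ (p - 1)‖ ≤ p * c ^ (p - 1) := fun x hx => by
    have : 0 ≤ x ^ (p - 1) := Real.rpow_nonneg hx.1 _
    rw [Real.norm_of_nonneg (by positivity)]
    exact mul_le_mul_of_nonneg_left (Real.rpow_le_rpow hx.1 hx.2 (by linarith)) (by linarith)
  simpa only [Real.norm_eq_abs] using
    (convex_Icc 0 c).norm_image_sub_le_of_norm_hasDerivWithin_le hderiv hbound hb ha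

theorem abs_rpow_sub_rpow_le_of_le_one {p δ a b : ℝ} (hp₀ : 0 ≤ p) (hp₁ : p ≤ 1) (hδ : 0 < δ)
    (ha : δ ≤ a) (hb : δ ≤ b) : |a ^ p - b ^ p| ≤ p * δ ^ (p - 1) * |a - b| := by
  have hderiv : ∀ x ∈ Set.Ici δ,
      HasDerivWithinAt (fun x : ℝ => x ^ p) (p * x ^ (p - 1)) (Set.Ici δ) x :=
    fun x hx => (Real.hasDerivAt_rpow_const (Or.inl (hδ.trans_le hx).ne')).hasDerivWithinAt
  have hbound : ∀ x ∈ Set.Ici δ, ‖p * x ^ (p - 1)‖ ≤ p * δ ^ (p - 1) := fun x hx => by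
    have : 0 ≤ x ^ (p - 1) := Real.rpow_nonneg (hδ.le.trans hx) _
    rw [Real.norm_of_nonneg (by positivity)]
    exact mul_le_mul_of_nonneg_left (Real.rpow_le_rpow_of_nonpos hδ hx (by linarith)) hp₀
  simpa only [Real.norm_eq_abs] using
    (convex_Ici δ).norm_image_sub_le_of_norm_hasDerivWithin_le hderiv hbound hb ha

theorem Matrix.exists_orthonormal_sum_vecMulVec_eq {m n : Type*} [Fintype m] [Fintype n]
    [DecidableEq n] (Δ : Matrix m n ℝ) :
    ∃ u : Fin Δ.rank → m → ℝ, (∀ k, ∑ i, u k i ^ 2 = 1) ∧ Δ = ∑ k, vecMulVec (u k) (u k ᵥ* Δ) := by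
  set W := LinearMap.range (toEuclideanLin Δ)
  have hW : Module.finrank ℝ W = Δ.rank := by
    rw [rank_eq_finrank_range_toLin Δ (EuclideanSpace.basisFun m ℝ).toBasis
      (EuclideanSpace.basisFun n ℝ).toBasis, ← toEuclideanLin_eq_toLin_orthonormal]
  set b := (stdOrthonormalBasis ℝ W).reindex (finCongr hW)
  refine ⟨fun k => (b k : EuclideanSpace ℝ m), fun k => ?_, ?_⟩
  · have h : ‖(b k : EuclideanSpace ℝ m)‖ = 1 := b.orthonormal.1 k
    rw [EuclideanSpace.norm_eq, Real.sqrt_eq_one] at h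
    simpa only [Real.norm_eq_abs, sq_abs] using h
  · ext i j
    set w : W := ⟨toEuclideanLin Δ (EuclideanSpace.single j 1), LinearMap.mem_range_self _ _⟩
    have hinner : ∀ k, inner ℝ (b k) w = (b k ᵥ* Δ) j := fun k => by
      simp [w, EuclideanSpace.inner_eq_star_dotProduct, vecMul, dotProduct, mul_comm]
    calc Δ i j = (w : EuclideanSpace ℝ m) i := by simp [w]
      _ = ∑ k, inner ℝ (b k) w * (b k : EuclideanSpace ℝ m) i := by
        conv_lhs => rw [← b.sum_repr' w]
        simp
      _ = _ := by simp [Matrix.sum_apply, vecMulVec_apply, hinner, mul_comm]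

theorem star_dotProduct_self_eq_sum_norm_sq {n : Type*} [Fintype n] (x : n → ℂ) :
    star x ⬝ᵥ x = ((∑ i, ‖x i‖ ^ 2 : ℝ) : ℂ) := by
  push_cast
  exact sum_congr rfl fun i _ => Complex.conj_mul' (x i)

section Resolvent

variable {n : Type*} [Fintype n] [DecidableEq n] {H : Matrix n n ℂ} {z : ℂ}

theorem Matrix.IsHermitian.im_star_dotProduct_sub_smul_one_mulVec (hH : H.IsHermitian) (z : ℂ)
    (x : n → ℂ) : (star x ⬝ᵥ (H - z • 1) *ᵥ x).im = -(z.im * ∑ i, ‖x i‖ ^ 2) := by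
  have hreal : (star x ⬝ᵥ H *ᵥ x).im = 0 := hH.im_star_dotProduct_mulVec_self x
  rw [sub_mulVec, smul_mulVec, one_mulVec, dotProduct_sub, dotProduct_smul,
    star_dotProduct_self_eq_sum_norm_sq, Complex.sub_im, hreal, smul_eq_mul, Complex.mul_im,
    Complex.ofReal_re, Complex.ofReal_im]
  ring

theorem Matrix.IsHermitian.im_mul_sqrt_le (hH : H.IsHermitian) (hz : 0 ≤ z.im) (x : n → ℂ) :
    z.im * √(∑ i, ‖x i‖ ^ 2) ≤ √(∑ i, ‖((H - z • 1) *ᵥ x) i‖ ^ 2) := by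
  set X := √(∑ i, ‖x i‖ ^ 2)
  set Y := √(∑ i, ‖((H - z • 1) *ᵥ x) i‖ ^ 2)
  have key : z.im * X * X ≤ X * Y := calc
    z.im * X * X = |(star x ⬝ᵥ (H - z • 1) *ᵥ x).im| := by
      rw [hH.im_star_dotProduct_sub_smul_one_mulVec, abs_neg, mul_assoc,
        Real.mul_self_sqrt (by positivity), abs_of_nonneg (by positivity)]
    _ ≤ ‖star x ⬝ᵥ (H - z • 1) *ᵥ x‖ := Complex.abs_im_le_norm _
    _ ≤ ∑ i, ‖x i‖ * ‖((H - z • 1) *ᵥ x) i‖ := by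
      refine (norm_sum_le _ _).trans_eq (sum_congr rfl fun i _ => ?_)
      rw [Pi.star_apply, norm_mul, norm_star]
    _ ≤ X * Y := Real.sum_mul_le_sqrt_mul_sqrt _ _ _
  have hY : 0 ≤ Y := Real.sqrt_nonneg _
  have hX : 0 ≤ X := Real.sqrt_nonneg _
  rcases hX.eq_or_lt with hX | hX
  · rwa [← hX, mul_zero]
  · exact le_of_mul_le_mul_right (by linarith) hX

theorem Matrix.IsHermitian.isUnit_det_sub_smul_one_s9 (hH : H.IsHermitian) (hz : 0 < z.im) :
    IsUnit (H - z • 1).det := by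
  rw [isUnit_iff_ne_zero]
  intro hdet
  obtain ⟨x, hx, hAx⟩ := exists_mulVec_eq_zero_iff.mpr hdet
  have hle := hH.im_mul_sqrt_le hz.le x
  simp only [hAx, Pi.zero_apply, norm_zero, ne_eq, OfNat.ofNat_ne_zero, not_false_eq_true,
    zero_pow, sum_const_zero, Real.sqrt_zero] at hle
  have hsum : √(∑ i, ‖x i‖ ^ 2) = 0 :=
    le_antisymm (nonpos_of_mul_nonpos_right hle hz) (Real.sqrt_nonneg _)
  rw [Real.sqrt_eq_zero (by positivity), sum_eq_zero_iff_of_nonneg (fun _ _ => by positivity)]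
    at hsum
  exact hx (funext fun i => by simpa using hsum i (mem_univ i))

theorem Matrix.IsHermitian.mul_inv_sub_smul_one (hH : H.IsHermitian) (hz : 0 < z.im) :
    (H - z • 1) * (H - z • 1)⁻¹ = 1 :=
  mul_nonsing_inv _ (hH.isUnit_det_sub_smul_one_s9 hz)

theorem Matrix.IsHermitian.sqrt_inv_mulVec_le (hH : H.IsHermitian) (hz : 0 < z.im) (w : n → ℂ) :
    √(∑ i, ‖((H - z • 1)⁻¹ *ᵥ w) i‖ ^ 2) ≤ √(∑ i, ‖w i‖ ^ 2) / z.im := by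
  rw [le_div_iff₀ hz, mul_comm]
  have h := hH.im_mul_sqrt_le hz.le ((H - z • 1)⁻¹ *ᵥ w)
  rwa [mulVec_mulVec, hH.mul_inv_sub_smul_one hz, one_mulVec] at h

theorem Matrix.IsHermitian.im_inv_apply_self_mem_Icc (hH : H.IsHermitian) (hz : 0 < z.im)
    (i : n) : ((H - z • 1)⁻¹ i i).im ∈ Set.Icc 0 z.im⁻¹ := by
  set y := (H - z • 1)⁻¹ *ᵥ Pi.single i 1
  have hy : (H - z • 1) *ᵥ y = Pi.single i 1 := by
    simp only [y, mulVec_mulVec, hH.mul_inv_sub_smul_one hz, one_mulVec]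
  have him : ((H - z • 1)⁻¹ i i).im = z.im * ∑ j, ‖y j‖ ^ 2 := by
    have h := hH.im_star_dotProduct_sub_smul_one_mulVec z y
    rw [hy, dotProduct_single, mul_one, Pi.star_apply] at h
    simpa [y, mulVec_single_one] using h
  have hy_le : √(∑ j, ‖y j‖ ^ 2) ≤ z.im⁻¹ := by
    have hsingle : ∑ j, ‖(Pi.single i 1 : n → ℂ) j‖ ^ 2 = 1 := by
      simp [Pi.single_apply, apply_ite]
    have h := hH.sqrt_inv_mulVec_le hz (Pi.single i 1)
    rwa [hsingle, Real.sqrt_one, one_div] at h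
  rw [him, ← Real.sq_sqrt (by positivity : 0 ≤ ∑ j, ‖y j‖ ^ 2)]
  refine ⟨by positivity, ?_⟩
  calc z.im * √(∑ j, ‖y j‖ ^ 2) ^ 2 ≤ z.im * z.im⁻¹ ^ 2 := by gcongr
    _ = z.im⁻¹ := by field_simp

end Resolvent

theorem Matrix.mul_vecMulVec_mul_apply_self {n R : Type*} [Fintype n] [CommSemiring R]
    (P S : Matrix n n R) (hS : S.IsSymm) (a b : n → R) (i : n) :
    (P * vecMulVec a b * S) i i = (P *ᵥ a) i * (S *ᵥ b) i := by
  rw [mul_vecMulVec, vecMulVec_mul, vecMulVec_apply, ← mulVec_transpose, hS.eq]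

theorem Matrix.sum_norm_mul_vecMulVec_mul_apply_self_le {n : Type*} [Fintype n]
    (P S : Matrix n n ℂ) (hS : S.IsSymm) (a b : n → ℂ) :
    ∑ i, ‖(P * vecMulVec a b * S) i i‖ ≤
      √(∑ i, ‖(P *ᵥ a) i‖ ^ 2) * √(∑ i, ‖(S *ᵥ b) i‖ ^ 2) := by
  simp_rw [mul_vecMulVec_mul_apply_self P S hS, norm_mul]
  exact Real.sum_mul_le_sqrt_mul_sqrt _ _ _

theorem Matrix.IsSymm.isHermitian_map_ofReal_s9 {n : Type*} {B : Matrix n n ℝ} (hB : B.IsSymm) :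
    (B.map ((↑) : ℝ → ℂ)).IsHermitian :=
  (isHermitian_iff_isSymm.mpr hB).map _ fun x => by simp

theorem sum_norm_inv_apply_self_sub_le {n : Type*} [Fintype n] [DecidableEq n]
    {B B' : Matrix n n ℝ} (hB : B.IsSymm) (hB' : B'.IsSymm) {z : ℂ} (hz : 0 < z.im) {C : ℝ}
    (hC : ∀ x : n → ℝ, √(∑ i, ((B' - B) *ᵥ x) i ^ 2) ≤ C * √(∑ i, x i ^ 2)) :
    ∑ i, ‖(B'.map ((↑) : ℝ → ℂ) - z • 1)⁻¹ i i - (B.map ((↑) : ℝ → ℂ) - z • 1)⁻¹ i i‖ ≤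
      (B' - B).rank * (C / z.im ^ 2) := by
  set A := B.map ((↑) : ℝ → ℂ) - z • 1
  set A' := B'.map ((↑) : ℝ → ℂ) - z • 1
  have hH := hB.isHermitian_map_ofReal_s9
  have hH' := hB'.isHermitian_map_ofReal_s9
  have hS : A⁻¹.IsSymm := ((hB.map _).sub (isSymm_one.smul z)).inv
  have hresolvent : A'⁻¹ - A⁻¹ = -(A'⁻¹ * (B' - B).map ((↑) : ℝ → ℂ) * A⁻¹) := by
    have hdiff : (B' - B).map ((↑) : ℝ → ℂ) = A' - A := by
      ext i j
      simp [A, A']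
    calc A'⁻¹ - A⁻¹ = A'⁻¹ * A * A⁻¹ - A'⁻¹ * A' * A⁻¹ := by
          rw [mul_assoc, hH.mul_inv_sub_smul_one hz, mul_one,
            nonsing_inv_mul _ (hH'.isUnit_det_sub_smul_one_s9 hz), one_mul]
      _ = _ := by rw [hdiff]; noncomm_ring
  obtain ⟨u, hu, hΔ⟩ := (B' - B).exists_orthonormal_sum_vecMulVec_eq
  set a : Fin (B' - B).rank → n → ℂ := fun k i => (u k i : ℂ)
  set b : Fin (B' - B).rank → n → ℂ := fun k i => (((B' - B) *ᵥ u k) i : ℂ)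
  have hΔc : (B' - B).map ((↑) : ℝ → ℂ) = ∑ k, vecMulVec (a k) (b k) := by
    conv_lhs => rw [hΔ]
    ext i j
    simp [a, b, Matrix.sum_apply, vecMulVec_apply, ← mulVec_transpose, (hB'.sub hB).eq]
  have hk : ∀ k, √(∑ i, ‖(A'⁻¹ *ᵥ a k) i‖ ^ 2) * √(∑ i, ‖(A⁻¹ *ᵥ b k) i‖ ^ 2) ≤
      C / z.im ^ 2 := by
    intro k
    have ha : √(∑ i, ‖a k i‖ ^ 2) = 1 := by simp [a, hu k]
    have hb : √(∑ i, ‖b k i‖ ^ 2) ≤ C := by simpa [b, hu k] using hC (u k)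
    calc _ ≤ 1 / z.im * (C / z.im) :=
          mul_le_mul (ha ▸ hH'.sqrt_inv_mulVec_le hz (a k))
            ((hH.sqrt_inv_mulVec_le hz (b k)).trans (div_le_div_of_nonneg_right hb hz.le))
            (Real.sqrt_nonneg _) (by positivity)
      _ = C / z.im ^ 2 := by field_simp
  calc ∑ i, ‖A'⁻¹ i i - A⁻¹ i i‖
      = ∑ i, ‖∑ k, (A'⁻¹ * vecMulVec (a k) (b k) * A⁻¹) i i‖ := by
        refine sum_congr rfl fun i _ => ?_
        rw [← Matrix.sub_apply, hresolvent, hΔc, mul_sum, sum_mul, neg_apply, norm_neg,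
          Matrix.sum_apply]
    _ ≤ ∑ k, ∑ i, ‖(A'⁻¹ * vecMulVec (a k) (b k) * A⁻¹) i i‖ := by
        rw [sum_comm]
        exact sum_le_sum fun i _ => norm_sum_le _ _
    _ ≤ ∑ k : Fin (B' - B).rank, C / z.im ^ 2 :=
        sum_le_sum fun k _ => (sum_norm_mul_vecMulVec_mul_apply_self_le _ _ hS _ _).trans (hk k)
    _ = _ := by simp

theorem abs_average_sub_average_le {N : ℕ} {f : ℝ → ℝ} {L K : ℝ} {a b : Fin N → ℂ} (hL : 0 ≤ L)
    (hf : ∀ i, |f (a i).im - f (b i).im| ≤ L * |(a i).im - (b i).im|)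
    (hab : ∑ i, ‖a i - b i‖ ≤ K) :
    |(1 / (N : ℝ)) * ∑ i, f (a i).im - (1 / (N : ℝ)) * ∑ i, f (b i).im| ≤ L * K / N := by
  rw [← mul_sub, ← sum_sub_distrib, abs_mul, abs_of_nonneg (by positivity), one_div,
    inv_mul_eq_div]
  gcongr
  calc |∑ i, (f (a i).im - f (b i).im)| ≤ ∑ i, |f (a i).im - f (b i).im| :=
        abs_sum_le_sum_abs _ _
    _ ≤ ∑ i, L * ‖a i - b i‖ := sum_le_sum fun i _ => (hf i).trans <|
        mul_le_mul_of_nonneg_left (by rw [← Complex.sub_im]; exact Complex.abs_im_le_norm _) hL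
    _ ≤ L * K := by rw [← mul_sum]; gcongr

theorem stmt9_general (N : ℕ) (t : ℝ) (ht : 0 < t) (E η : ℝ) (hη : 0 < η)
    (v : Fin N → ℝ) (M M' : Matrix (Fin N) (Fin N) ℝ) (hM : M.IsSymm) (hM' : M'.IsSymm)
    (hrank : (M' - M).rank ≤ 4)
    (hnorm : ∀ x : Fin N → ℝ,
      Real.sqrt (∑ i, ((M' - M).mulVec x i) ^ 2) ≤ 8 * t * Real.sqrt (∑ i, x i ^ 2)) :
    ((1 / (N : ℝ)) * ∑ i, ‖
        (resS M' (E + η * Complex.I) v i i - resS M (E + η * Complex.I) v i i)‖ ≤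
      32 * t / (N * η ^ 2)) ∧
    (∀ s : ℝ, 1 ≤ s →
      |(1 / (N : ℝ)) * ∑ i, (resS M' (E + η * Complex.I) v i i).im ^ s -
          (1 / (N : ℝ)) * ∑ i, (resS M (E + η * Complex.I) v i i).im ^ s| ≤
        32 * s * t / (N * η ^ (s + 1))) ∧
    (∀ s : ℝ, s ∈ Set.Ioo (0 : ℝ) 1 → ∀ δ : ℝ, δ ∈ Set.Ioc (0 : ℝ) η⁻¹ →
      |(1 / (N : ℝ)) * ∑ i, max (resS M' (E + η * Complex.I) v i i).im δ ^ s -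
          (1 / (N : ℝ)) * ∑ i, max (resS M (E + η * Complex.I) v i i).im δ ^ s| ≤
        32 * s * t * δ ^ (s - 1) / (N * η ^ 2)) := by
  set z : ℂ := E + η * Complex.I
  have hz : z.im = η := by simp [z]
  have hz_pos : 0 < z.im := hz ▸ hη
  have hdiag : ∀ M₀ : Matrix (Fin N) (Fin N) ℝ, M₀.IsSymm →
      ∀ i, (resS M₀ z v i i).im ∈ Set.Icc 0 η⁻¹ := fun M₀ h i =>
    hz ▸ (h.add (isSymm_diagonal v)).isHermitian_map_ofReal_s9.im_inv_apply_self_mem_Icc hz_pos i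
  have hsum : ∑ i, ‖resS M' z v i i - resS M z v i i‖ ≤ 32 * t / η ^ 2 := by
    have h := sum_norm_inv_apply_self_sub_le (hM.add (isSymm_diagonal v))
      (hM'.add (isSymm_diagonal v)) hz_pos (C := 8 * t)
      (by simpa only [add_sub_add_right_eq_sub] using hnorm)
    rw [add_sub_add_right_eq_sub, hz] at h
    calc _ ≤ _ := h
      _ ≤ 4 * (8 * t / η ^ 2) := by gcongr; exact_mod_cast hrank
      _ = 32 * t / η ^ 2 := by ring
  refine ⟨?_, fun s hs => ?_, fun s hs δ hδ => ?_⟩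
  · calc _ ≤ 1 / (N : ℝ) * (32 * t / η ^ 2) := by gcongr
      _ = _ := by ring
  · refine (abs_average_sub_average_le (f := fun x => x ^ s)
      (mul_nonneg (by linarith) (by positivity))
      (fun i => abs_rpow_sub_rpow_le_of_one_le hs (hdiag M' hM' i) (hdiag M hM i)) hsum).trans_eq ?_
    have hpow : η ^ (s + 1) = η ^ (s - 1) * η ^ 2 := by
      rw [← Real.rpow_natCast, ← Real.rpow_add hη]
      ring_nf
    rw [Real.inv_rpow hη.le, hpow]
    field_simp
  · have hL : 0 ≤ s * δ ^ (s - 1) := mul_nonneg hs.1.le (Real.rpow_nonneg hδ.1.le _)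
    have hlip : ∀ x y : ℝ, |max x δ ^ s - max y δ ^ s| ≤ s * δ ^ (s - 1) * |x - y| := fun x y =>
      (abs_rpow_sub_rpow_le_of_le_one hs.1.le hs.2.le hδ.1 (le_max_right x δ)
        (le_max_right y δ)).trans (mul_le_mul_of_nonneg_left (abs_max_sub_max_le_abs x y δ) hL)
    refine (abs_average_sub_average_le (f := fun x => max x δ ^ s) hL (fun i => hlip _ _)
      hsum).trans_eq ?_
    field_simp

theorem stmt9 (N : ℕ) (hN : 1 ≤ N) (t : ℝ) (ht : 0 < t) (E η : ℝ) (hη : 0 < η)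
    (v : Fin N → ℝ) (M M' : Matrix (Fin N) (Fin N) ℝ) (hM : M.IsSymm) (hM' : M'.IsSymm)
    (hrank : (M' - M).rank ≤ 4)
    (hnorm : ∀ x : Fin N → ℝ,
      Real.sqrt (∑ i, ((M' - M).mulVec x i) ^ 2) ≤ 8 * t * Real.sqrt (∑ i, x i ^ 2)) :
    ((1 / (N : ℝ)) * ∑ i, ‖
        (resS M' (E + η * Complex.I) v i i - resS M (E + η * Complex.I) v i i)‖ ≤
      32 * t / (N * η ^ 2)) ∧
    (∀ s : ℝ, 1 ≤ s →
      |(1 / (N : ℝ)) * ∑ i, (resS M' (E + η * Complex.I) v i i).im ^ s -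
          (1 / (N : ℝ)) * ∑ i, (resS M (E + η * Complex.I) v i i).im ^ s| ≤
        32 * s * t / (N * η ^ (s + 1))) ∧
    (∀ s : ℝ, s ∈ Set.Ioo (0 : ℝ) 1 → ∀ δ : ℝ, δ ∈ Set.Ioc (0 : ℝ) η⁻¹ →
      |(1 / (N : ℝ)) * ∑ i, max (resS M' (E + η * Complex.I) v i i).im δ ^ s -
          (1 / (N : ℝ)) * ∑ i, max (resS M (E + η * Complex.I) v i i).im δ ^ s| ≤
        32 * s * t * δ ^ (s - 1) / (N * η ^ 2)) :=
  stmt9_general N t ht E η hη v M M' hM hM' hrank hnorm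
end
end

section
/- Fix integers d ≥ 3 and r ≥ 1. There exists a constant C(d) > 0 such that for every admissible N with N ≥ C the following holds: if 𝒢_N is a uniformly random simple d-regular graph on the vertex set {1,…,N}, then the probability that the ball of radius r around vertex 1 contains a cycle (i.e., the subgraph of 𝒢_N induced on the set of vertices at graph distance at most r from vertex 1 is not acyclic) is at most C·(d−1)^{2r}/N. -/
/-!
Switching. If the ball of radius `r` around `o` in a `d`-regular graph `G` is not acyclic, then
some edge `uw` keeps both ends within distance `r` of `o` after it is deleted. For each of the
`dN - O(d²(d-1)^r)` ordered edges `xy` with both ends farther than `r + 1` from `o`, replacing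
`uw, xy` by `ux, wy` gives a `d`-regular graph in which `ux` and `wy` are edges leaving the ball of
radius `r`, and `G` is recovered from that graph and these two marked edges. A `d`-regular graph
has at most `(2d²(d-1)^r)²` such marked pairs, so `#bad · dN ≲ #regular · 4d⁴(d-1)^{2r}`.
-/

open MeasureTheory ProbabilityTheory
open scoped Classical ENNReal

noncomputable section

instance (N : ℕ) : MeasurableSpace (SimpleGraph (Fin N)) := ⊤

/-- The ball of radius `r` around the vertex `o` in the graph `G`: all vertices
reachable from `o` by a walk of length at most `r`. -/
def graphBall {V : Type*} (G : SimpleGraph V) (o : V) (r : ℕ) : Set V :=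
  {v | ∃ p : G.Walk o v, p.length ≤ r}

open Finset

namespace SimpleGraph

section Ball

variable {V : Type*} {G H : SimpleGraph V} {o u v w x y : V} {i r s : ℕ}

lemma mem_graphBall_iff_edist_le : v ∈ graphBall G o r ↔ G.edist o v ≤ r := by
  refine ⟨fun ⟨p, hp⟩ ↦ (edist_le p).trans (by exact_mod_cast hp), fun h ↦ ?_⟩
  obtain ⟨p, hp⟩ := exists_walk_of_edist_ne_top (ne_top_of_le_ne_top (ENat.natCast_ne_top r) h)
  exact ⟨p, by exact_mod_cast hp ▸ h⟩

lemma exists_adj_edist_eq_of_edist_eq_succ (h : G.edist o v = i + 1) :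
    ∃ u, G.Adj u v ∧ G.edist o u = i := by
  obtain ⟨p, hp⟩ := exists_walk_of_edist_eq_coe h
  have hnil : ¬p.Nil := by simp [← Walk.length_eq_zero_iff, hp]
  refine ⟨p.penultimate, p.adj_penultimate hnil, le_antisymm ?_ ?_⟩
  · simpa [Walk.length_dropLast, hp] using edist_le p.dropLast
  · have := G.edist_triangle (u := o) (v := p.penultimate) (w := v)
    rw [h, edist_eq_one_iff_adj.mpr (p.adj_penultimate hnil)] at this
    exact_mod_cast (ENat.add_le_add_iff_right ENat.one_ne_top).mp this

lemma graphBall_mono (hGH : G ≤ H) (hrs : r ≤ s) : graphBall G o r ⊆ graphBall H o s :=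
  fun _ ⟨p, hp⟩ ↦ ⟨p.mapLe hGH, by simpa using hp.trans hrs⟩

lemma mem_graphBall_succ_of_adj (hu : u ∈ graphBall G o r) (huv : G.Adj u v) :
    v ∈ graphBall G o (r + 1) := by
  obtain ⟨p, hp⟩ := hu
  exact ⟨p.concat huv, by simpa using hp⟩

lemma mem_graphBall_of_mem_support {p : G.Walk o v} (hp : p.length ≤ r) (hx : x ∈ p.support) :
    x ∈ graphBall G o r :=
  ⟨p.takeUntil x hx, (p.length_takeUntil_le_length hx).trans hp⟩

lemma mem_graphBall_deleteEdges_of_notMem (hv : v ∈ graphBall G o r)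
    (hx : x ∉ graphBall G o r) : v ∈ graphBall (G.deleteEdges {s(x, y)}) o r := by
  obtain ⟨p, hp⟩ := hv
  have hxy : s(x, y) ∉ p.edges := fun h ↦
    hx (mem_graphBall_of_mem_support hp (p.fst_mem_support_of_mem_edges h))
  exact ⟨p.toDeleteEdge _ hxy, by simpa using hp⟩

lemma dist_lt_of_mem_edges_of_length_eq {p : G.Walk o w} (hp : p.length = G.dist o w)
    (he : s(u, w) ∈ p.edges) (huw : u ≠ w) : G.dist o u < G.dist o w :=
  (dist_le _).trans_lt (hp ▸ p.length_takeUntil_lt_length (p.fst_mem_support_of_mem_edges he) huw)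

/-- Take a vertex `u` of the cycle farthest from `o`. A shortest path to a cycle-neighbour `w` of
`u` cannot use the edge `uw`, as `u` is no closer to `o` than `w`; and a shortest path to `u`
uses at most one of the two cycle edges at `u`. -/
lemma exists_adj_mem_graphBall_deleteEdges (h : ¬(G.induce (graphBall G o r)).IsAcyclic) :
    ∃ u w, G.Adj u w ∧ u ∈ graphBall (G.deleteEdges {s(u, w)}) o r ∧
      w ∈ graphBall (G.deleteEdges {s(u, w)}) o r := by
  obtain ⟨v, c, hc⟩ : ∃ v, ∃ c : (G.induce (graphBall G o r)).Walk v v, c.IsCycle := by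
    simpa [IsAcyclic] using h
  obtain ⟨u, hu, hmax⟩ := c.support.toFinset.exists_max_image (fun x ↦ G.dist o x) ⟨v, by simp⟩
  rw [List.mem_toFinset] at hu
  set c' := c.rotate u hu
  have hc' : c'.IsCycle := hc.rotate hu
  have hdist : ∀ x ∈ c'.support, G.dist o x ≤ G.dist o u := fun x hx ↦
    hmax x (List.mem_toFinset.mpr ((c.mem_support_rotate_iff u hu).mp hx))
  obtain ⟨P, hP, hPlen⟩ := (u.2.elim fun p _ ↦ ⟨p⟩ : G.Reachable o u).exists_path_of_dist
  obtain ⟨w, huw, hwc, hwP⟩ : ∃ w, (G.induce (graphBall G o r)).Adj u w ∧ w ∈ c'.support ∧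
      (w : V) ≠ P.penultimate := by
    by_cases h₁ : (c'.snd : V) = P.penultimate
    · refine ⟨c'.penultimate, (c'.adj_penultimate hc'.not_nil).symm,
        c'.getVert_mem_support _, fun h₂ ↦ hc'.snd_ne_penultimate (Subtype.ext (h₁.trans h₂.symm))⟩
    · exact ⟨c'.snd, c'.adj_snd hc'.not_nil, c'.getVert_mem_support _, h₁⟩
  obtain ⟨Q, hQ, hQlen⟩ := (w.2.elim fun p _ ↦ ⟨p⟩ : G.Reachable o w).exists_path_of_dist
  have huwP : s((u : V), w) ∉ P.edges := fun he ↦ hwP (hP.eq_penultimate_of_mem_edges he)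
  have huwQ : s((u : V), w) ∉ Q.edges := fun he ↦ (hdist w hwc).not_gt
    (dist_lt_of_mem_edges_of_length_eq hQlen (Sym2.eq_swap ▸ he) (G.ne_of_adj huw))
  refine ⟨u, w, huw, ⟨P.toDeleteEdge _ huwP, ?_⟩, ⟨Q.toDeleteEdge _ huwQ, ?_⟩⟩
  · obtain ⟨p, hp⟩ := u.2
    simpa [hPlen] using (dist_le p).trans hp
  · obtain ⟨p, hp⟩ := w.2
    simpa [hQlen] using (dist_le p).trans hp

end Ball

section BallCard

variable {V : Type*} [Fintype V] {G : SimpleGraph V} {o : V} {d i : ℕ}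

lemma IsRegularOfDegree.sum_degree_eq (hG : G.IsRegularOfDegree d) (s : Finset V) :
    ∑ v ∈ s, G.degree v = d * #s := by
  rw [sum_congr rfl fun v _ ↦ hG.degree_eq v, sum_const, smul_eq_mul, mul_comm]

lemma card_edist_eq_one_le (hG : G.IsRegularOfDegree d) : #{v | G.edist o v = 1} ≤ d := by
  rw [← hG.degree_eq o, ← card_neighborFinset_eq_degree]
  exact card_le_card fun v hv ↦ by simpa [edist_eq_one_iff_adj] using hv

/-- Every vertex at distance `i ≥ 1` has a neighbour at distance `i - 1`, so at most `d - 1`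
neighbours at distance `i + 1`. -/
lemma card_edist_eq_succ_le (hG : G.IsRegularOfDegree d) (hi : i ≠ 0) :
    #{v | G.edist o v = ↑(i + 1)} ≤ (d - 1) * #{v | G.edist o v = i} := by
  rw [← mul_one #{v | G.edist o v = ↑(i + 1)}, mul_comm (d - 1)]
  refine card_mul_le_card_mul (fun a b ↦ G.Adj a b) (fun a ha ↦ ?_) (fun b hb ↦ ?_)
  · obtain ⟨u, hu, hui⟩ := exists_adj_edist_eq_of_edist_eq_succ (by simpa using ha)
    exact card_pos.mpr ⟨u, by simpa [bipartiteAbove, hui] using hu.symm⟩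
  · obtain ⟨j, rfl⟩ := Nat.exists_eq_succ_of_ne_zero hi
    obtain ⟨c, hc, hcj⟩ := exists_adj_edist_eq_of_edist_eq_succ (by simpa using hb)
    calc #(bipartiteBelow (fun a b ↦ G.Adj a b) _ b)
        ≤ #((G.neighborFinset b).erase c) := card_le_card fun a ha ↦ by
          simp only [bipartiteBelow, mem_filter, mem_univ, true_and] at ha
          refine mem_erase.mpr ⟨?_, by simpa using ha.2.symm⟩
          rintro rfl
          rw [hcj] at ha
          exact absurd ha.1 (by norm_cast; omega)
      _ = d - 1 := by
          rw [card_erase_of_mem (by simpa using hc.symm), card_neighborFinset_eq_degree,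
            hG.degree_eq]

lemma card_edist_eq_succ_le_pow (hG : G.IsRegularOfDegree d) (i : ℕ) :
    #{v | G.edist o v = ↑(i + 1)} ≤ d * (d - 1) ^ i := by
  induction i with
  | zero => simpa using card_edist_eq_one_le hG
  | succ i ih =>
    calc #{v | G.edist o v = ↑(i + 1 + 1)} ≤ (d - 1) * #{v | G.edist o v = ↑(i + 1)} :=
          card_edist_eq_succ_le hG i.succ_ne_zero
      _ ≤ (d - 1) * (d * (d - 1) ^ i) := by gcongr
      _ = d * (d - 1) ^ (i + 1) := by ring

lemma card_graphBall_le (hG : G.IsRegularOfDegree d) (hd : 3 ≤ d) (r : ℕ) :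
    #(graphBall G o r).toFinset ≤ 2 * d * (d - 1) ^ r := by
  induction r with
  | zero =>
    calc #(graphBall G o 0).toFinset ≤ #{o} := card_le_card fun v hv ↦ by
          simp [mem_graphBall_iff_edist_le, edist_eq_zero_iff] at hv
          simp [hv]
      _ ≤ 2 * d * (d - 1) ^ 0 := by simp; omega
  | succ r ih =>
    have hsub : (graphBall G o (r + 1)).toFinset ⊆
        (graphBall G o r).toFinset ∪ ({v | G.edist o v = ↑(r + 1)} : Finset V) := fun v hv ↦ by
      simp only [Set.mem_toFinset, mem_filter, mem_univ, true_and, mem_union,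
        mem_graphBall_iff_edist_le] at hv ⊢
      rcases hv.lt_or_eq with hlt | heq
      · exact Or.inl (Order.le_of_lt_add_one (by simpa using hlt))
      · exact Or.inr heq
    calc #(graphBall G o (r + 1)).toFinset
        ≤ #(graphBall G o r).toFinset + #{v | G.edist o v = ↑(r + 1)} :=
          (card_le_card hsub).trans (card_union_le _ _)
      _ ≤ 2 * d * (d - 1) ^ r + d * (d - 1) ^ r := add_le_add ih (card_edist_eq_succ_le_pow hG r)
      _ ≤ 2 * d * (d - 1) ^ (r + 1) := by
          rw [pow_succ]
          have : 3 ≤ 2 * (d - 1) := by omega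
          nlinarith [Nat.zero_le (d * (d - 1) ^ r)]

end BallCard

section Switch

variable {V : Type*} {G : SimpleGraph V} {o u v w x y a : V} {r : ℕ}

def switch (G : SimpleGraph V) (u w x y : V) : SimpleGraph V :=
  G.deleteEdges {s(u, w), s(x, y)} ⊔ edge u x ⊔ edge w y

structure IsSwitchable (G : SimpleGraph V) (u w x y : V) : Prop where
  adj_uw : G.Adj u w
  adj_xy : G.Adj x y
  not_adj_ux : ¬G.Adj u x
  not_adj_wy : ¬G.Adj w y
  ne_xu : x ≠ u
  ne_xw : x ≠ w
  ne_yu : y ≠ u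
  ne_yw : y ≠ w

lemma switch_comm_left : G.switch u w x y = G.switch w u y x := by
  simp only [switch, Sym2.eq_swap (a := u), Sym2.eq_swap (a := x), sup_right_comm _ (edge u x)]

lemma switch_comm_pairs : G.switch u w x y = G.switch x y u w := by
  simp only [switch, Set.pair_comm s(u, w), edge_comm x, edge_comm y]

lemma IsSwitchable.comm_left (h : G.IsSwitchable u w x y) : G.IsSwitchable w u y x :=
  ⟨h.adj_uw.symm, h.adj_xy.symm, h.not_adj_wy, h.not_adj_ux, h.ne_yw, h.ne_yu, h.ne_xw, h.ne_xu⟩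

lemma IsSwitchable.comm_pairs (h : G.IsSwitchable u w x y) : G.IsSwitchable x y u w :=
  ⟨h.adj_xy, h.adj_uw, fun h' ↦ h.not_adj_ux h'.symm, fun h' ↦ h.not_adj_wy h'.symm,
    h.ne_xu.symm, h.ne_yu.symm, h.ne_xw.symm, h.ne_yw.symm⟩

lemma deleteEdges_le_switch : G.deleteEdges {s(u, w), s(x, y)} ≤ G.switch u w x y :=
  le_sup_left.trans le_sup_left

lemma switch_adj_left (hxu : x ≠ u) : (G.switch u w x y).Adj u x :=
  Or.inl (Or.inr ((edge_adj ..).mpr ⟨Or.inl ⟨rfl, rfl⟩, hxu.symm⟩))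

lemma switch_adj_right (hyw : y ≠ w) : (G.switch u w x y).Adj w y :=
  Or.inr ((edge_adj ..).mpr ⟨Or.inl ⟨rfl, rfl⟩, hyw.symm⟩)

lemma IsSwitchable.switch_switch (h : G.IsSwitchable u w x y) :
    (G.switch u w x y).switch u x w y = G := by
  ext a b
  simp only [switch, sup_adj, deleteEdges_adj, edge_adj, Set.mem_insert_iff, Set.mem_singleton_iff,
    Sym2.eq_iff]
  obtain ⟨huw, hxy, hux, hwy, -, -, -, -⟩ := h
  grind [G.adj_comm, SimpleGraph.irrefl]

lemma isSwitchable_of_notMem_graphBall (huw : G.Adj u w) (hu : u ∈ graphBall G o r)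
    (hw : w ∈ graphBall G o r) (hxy : G.Adj x y) (hx : x ∉ graphBall G o (r + 1))
    (hy : y ∉ graphBall G o (r + 1)) : G.IsSwitchable u w x y where
  adj_uw := huw
  adj_xy := hxy
  not_adj_ux h := hx (mem_graphBall_succ_of_adj hu h)
  not_adj_wy h := hy (mem_graphBall_succ_of_adj hw h)
  ne_xu h := hx (graphBall_mono le_rfl r.le_succ (h ▸ hu))
  ne_xw h := hx (graphBall_mono le_rfl r.le_succ (h ▸ hw))
  ne_yu h := hy (graphBall_mono le_rfl r.le_succ (h ▸ hu))
  ne_yw h := hy (graphBall_mono le_rfl r.le_succ (h ▸ hw))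

lemma mem_graphBall_switch (hv : v ∈ graphBall (G.deleteEdges {s(u, w)}) o r)
    (hx : x ∉ graphBall G o r) : v ∈ graphBall (G.switch u w x y) o r := by
  have hx' : x ∉ graphBall (G.deleteEdges {s(u, w)}) o r :=
    fun h ↦ hx (graphBall_mono (deleteEdges_le _) le_rfl h)
  have hv' := mem_graphBall_deleteEdges_of_notMem (y := y) hv hx'
  rw [deleteEdges_deleteEdges, Set.singleton_union] at hv'
  exact graphBall_mono deleteEdges_le_switch le_rfl hv'

variable [Fintype V]

lemma IsSwitchable.neighborFinset_switch_left (h : G.IsSwitchable u w x y) :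
    (G.switch u w x y).neighborFinset u = insert x ((G.neighborFinset u).erase w) := by
  ext b
  rw [mem_neighborFinset, mem_insert, mem_erase, mem_neighborFinset]
  simp only [switch, sup_adj, deleteEdges_adj, edge_adj, Set.mem_insert_iff, Set.mem_singleton_iff]
  obtain ⟨huw, -, hux, -, hxu, -, hyu, -⟩ := h
  grind [G.ne_of_adj huw]

lemma IsSwitchable.degree_switch_left (h : G.IsSwitchable u w x y) :
    (G.switch u w x y).degree u = G.degree u := by
  have hw : w ∈ G.neighborFinset u := (mem_neighborFinset ..).mpr h.adj_uw
  rw [← card_neighborFinset_eq_degree, h.neighborFinset_switch_left,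
    card_insert_of_notMem fun hx ↦ h.not_adj_ux (by simpa using mem_of_mem_erase hx),
    card_erase_add_one hw, card_neighborFinset_eq_degree]

lemma degree_switch_of_ne (hu : a ≠ u) (hw : a ≠ w) (hx : a ≠ x) (hy : a ≠ y) :
    (G.switch u w x y).degree a = G.degree a := by
  simp only [← card_neighborFinset_eq_degree]
  congr 1
  ext b
  rw [mem_neighborFinset, mem_neighborFinset]
  simp only [switch, sup_adj, deleteEdges_adj, edge_adj, Set.mem_insert_iff, Set.mem_singleton_iff,
    Sym2.eq_iff]
  grind

lemma IsSwitchable.isRegularOfDegree_switch {d : ℕ} (h : G.IsSwitchable u w x y)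
    (hG : G.IsRegularOfDegree d) : (G.switch u w x y).IsRegularOfDegree d := by
  intro a
  rw [← hG.degree_eq a]
  by_cases hu : a = u
  · rw [hu, h.degree_switch_left]
  by_cases hw : a = w
  · rw [hw, switch_comm_left, h.comm_left.degree_switch_left]
  by_cases hx : a = x
  · rw [hx, switch_comm_pairs, h.comm_pairs.degree_switch_left]
  by_cases hy : a = y
  · rw [hy, switch_comm_pairs, switch_comm_left, h.comm_pairs.comm_left.degree_switch_left]
  exact degree_switch_of_ne hu hw hx hy

end Switch

section DoubleCounting

variable {V : Type*} [Fintype V] {G : SimpleGraph V} {s : Finset V} {d : ℕ}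

def adjPairsFrom (G : SimpleGraph V) (s : Finset V) : Finset (V × V) :=
  (s ×ˢ univ).filter fun z ↦ G.Adj z.1 z.2

def adjPairsAvoiding (G : SimpleGraph V) (s : Finset V) : Finset (V × V) :=
  (sᶜ ×ˢ sᶜ).filter fun z ↦ G.Adj z.1 z.2

lemma card_adjPairsFrom : #(G.adjPairsFrom s) = ∑ v ∈ s, G.degree v := by
  rw [adjPairsFrom, card_filter, sum_product]
  simp [← card_neighborFinset_eq_degree, neighborFinset_eq_filter]

lemma sum_degree_le_card_adjPairsAvoiding :
    ∑ v, G.degree v ≤ #(G.adjPairsAvoiding s) + 2 * ∑ v ∈ s, G.degree v := by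
  have hswap : #((G.adjPairsFrom s).image Prod.swap) = #(G.adjPairsFrom s) :=
    card_image_of_injective _ Prod.swap_injective
  calc ∑ v, G.degree v = #(G.adjPairsFrom univ) := card_adjPairsFrom.symm
    _ ≤ #(G.adjPairsAvoiding s ∪ (G.adjPairsFrom s ∪ (G.adjPairsFrom s).image Prod.swap)) := by
        refine card_le_card fun z hz ↦ ?_
        simp only [adjPairsFrom, adjPairsAvoiding, mem_union, mem_filter, mem_product, mem_univ,
          mem_compl, mem_image, Prod.exists, Prod.swap_prod_mk] at hz ⊢
        grind [G.adj_comm]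
    _ ≤ #(G.adjPairsAvoiding s) + 2 * ∑ v ∈ s, G.degree v := by
        grw [card_union_le, card_union_le, hswap, card_adjPairsFrom]
        omega

lemma IsRegularOfDegree.mul_card_le_card_adjPairsAvoiding {o : V} {r : ℕ}
    (hG : G.IsRegularOfDegree d) (hd : 3 ≤ d) : d * Fintype.card V ≤
      #(G.adjPairsAvoiding (graphBall G o (r + 1)).toFinset) + 4 * d ^ 2 * (d - 1) ^ (r + 1) := by
  have h := sum_degree_le_card_adjPairsAvoiding (G := G) (s := (graphBall G o (r + 1)).toFinset)
  rw [hG.sum_degree_eq, hG.sum_degree_eq, card_univ] at h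
  grw [h, card_graphBall_le hG hd]
  exact le_of_eq (by ring)

lemma IsRegularOfDegree.card_adjPairsFrom_graphBall_le {o : V} {r : ℕ}
    (hG : G.IsRegularOfDegree d) (hd : 3 ≤ d) :
    #(G.adjPairsFrom (graphBall G o r).toFinset) ≤ 2 * d ^ 2 * (d - 1) ^ r := by
  rw [card_adjPairsFrom, hG.sum_degree_eq]
  grw [card_graphBall_le hG hd]
  exact le_of_eq (by ring)

variable [DecidableEq V]

/-- The switching `(G, xy) ↦ (G.switch u w x y, (u, x), (w, y))`, with `uw` the edge given by
`exists_adj_mem_graphBall_deleteEdges`, is injective because switching `ux, wy` back returns `G`. -/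
lemma sum_card_adjPairsAvoiding_le (o : V) (r : ℕ) :
    ∑ G ∈ ({G | G.IsRegularOfDegree d ∧ ¬(G.induce (graphBall G o r)).IsAcyclic} :
        Finset (SimpleGraph V)),
        #(G.adjPairsAvoiding (graphBall G o (r + 1)).toFinset) ≤
      ∑ G ∈ ({G | G.IsRegularOfDegree d} : Finset (SimpleGraph V)),
        #(G.adjPairsFrom (graphBall G o r).toFinset) ^ 2 := by
  set bad : Finset (SimpleGraph V) :=
    {G | G.IsRegularOfDegree d ∧ ¬(G.induce (graphBall G o r)).IsAcyclic}
  have : Nonempty V := ⟨o⟩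
  choose! u w huw hu hw using fun G (hG : G ∈ bad) ↦
    exists_adj_mem_graphBall_deleteEdges (mem_filter.mp hG).2.2
  have key : ∀ p ∈ bad.sigma fun G ↦ G.adjPairsAvoiding (graphBall G o (r + 1)).toFinset,
      p.1.IsRegularOfDegree d ∧ p.2.1 ∉ graphBall p.1 o r ∧
        p.1.IsSwitchable (u p.1) (w p.1) p.2.1 p.2.2 := by
    rintro ⟨G, x, y⟩ hp
    simp only [mem_sigma, adjPairsAvoiding, mem_filter, mem_product, mem_compl,
      Set.mem_toFinset] at hp
    obtain ⟨hG, ⟨hx, hy⟩, hxy⟩ := hp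
    have hball := graphBall_mono (G := G.deleteEdges {s(u G, w G)}) (o := o) (deleteEdges_le _)
      (le_refl r)
    exact ⟨(mem_filter.mp hG).2.1, fun h ↦ hx (graphBall_mono le_rfl r.le_succ h),
      isSwitchable_of_notMem_graphBall (huw G hG) (hball (hu G hG)) (hball (hw G hG)) hxy hx hy⟩
  simp only [sq, ← card_product, ← card_sigma]
  refine card_le_card_of_injOn (fun p ↦ ⟨p.1.switch (u p.1) (w p.1) p.2.1 p.2.2,
    ((u p.1, p.2.1), (w p.1, p.2.2))⟩) (fun p hp ↦ ?_) (fun p hp q hq hpq ↦ ?_)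
  · obtain ⟨hreg, hx, hsw⟩ := key p hp
    have hG : p.1 ∈ bad := (mem_sigma.mp hp).1
    simp only [mem_coe, mem_sigma, mem_filter, mem_univ, true_and, adjPairsFrom, mem_product,
      and_true, Set.mem_toFinset]
    exact ⟨hsw.isRegularOfDegree_switch hreg,
      ⟨mem_graphBall_switch (hu _ hG) hx, switch_adj_left hsw.ne_xu⟩,
      ⟨mem_graphBall_switch (hw _ hG) hx, switch_adj_right hsw.ne_yw⟩⟩
  · obtain ⟨G, x, y⟩ := p
    obtain ⟨G', x', y'⟩ := q
    simp only [Sigma.mk.inj_iff, Prod.mk.injEq, heq_eq_eq] at hpq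
    obtain ⟨hsw, ⟨hu, rfl⟩, hw, rfl⟩ := hpq
    have hGG' : G = G' := calc
      G = (G.switch (u G) (w G) x y).switch (u G) x (w G) y := (key _ hp).2.2.switch_switch.symm
      _ = (G'.switch (u G') (w G') x y).switch (u G') x (w G') y := by rw [hsw, hu, hw]
      _ = G' := (key _ hq).2.2.switch_switch
    rw [hGG']

lemma card_not_isAcyclic_mul_card_le (hd : 3 ≤ d) (o : V) (r : ℕ) :
    #({G | G.IsRegularOfDegree d ∧ ¬(G.induce (graphBall G o r)).IsAcyclic} :
        Finset (SimpleGraph V)) * Fintype.card V ≤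
      #({G | G.IsRegularOfDegree d} : Finset (SimpleGraph V)) *
        (8 * d ^ 3 * (d - 1) ^ (2 * r)) := by
  set bad : Finset (SimpleGraph V) :=
    {G | G.IsRegularOfDegree d ∧ ¬(G.induce (graphBall G o r)).IsAcyclic}
  set reg : Finset (SimpleGraph V) := {G | G.IsRegularOfDegree d}
  have hbad : #bad ≤ #reg :=
    card_le_card fun _ hG ↦ mem_filter.mpr ⟨mem_univ _, (mem_filter.mp hG).2.1⟩
  have hpow : (2 * d ^ 2 * (d - 1) ^ r) ^ 2 + 4 * d ^ 2 * (d - 1) ^ (r + 1) ≤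
      8 * d ^ 3 * (d - 1) ^ (2 * r) * d := by
    have h : d - 1 ≤ (d - 1) ^ r * d ^ 2 :=
      ((Nat.sub_le d 1).trans (Nat.le_self_pow two_ne_zero d)).trans
        (Nat.le_mul_of_pos_left _ (Nat.pow_pos (by omega)))
    calc (2 * d ^ 2 * (d - 1) ^ r) ^ 2 + 4 * d ^ 2 * (d - 1) ^ (r + 1)
        = 4 * d ^ 4 * ((d - 1) ^ r) ^ 2 + 4 * d ^ 2 * (d - 1) ^ r * (d - 1) := by ring
      _ ≤ 4 * d ^ 4 * ((d - 1) ^ r) ^ 2 + 4 * d ^ 2 * (d - 1) ^ r * ((d - 1) ^ r * d ^ 2) :=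
          Nat.add_le_add_left (Nat.mul_le_mul_left _ h) _
      _ = 8 * d ^ 3 * (d - 1) ^ (2 * r) * d := by ring
  refine Nat.le_of_mul_le_mul_right ?_ (by omega : 0 < d)
  calc #bad * Fintype.card V * d = ∑ G ∈ bad, d * Fintype.card V := by
        rw [sum_const, smul_eq_mul]; ring
    _ ≤ ∑ G ∈ bad, (#(G.adjPairsAvoiding (graphBall G o (r + 1)).toFinset) +
          4 * d ^ 2 * (d - 1) ^ (r + 1)) :=
        sum_le_sum fun G hG ↦ (mem_filter.mp hG).2.1.mul_card_le_card_adjPairsAvoiding hd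
    _ ≤ ∑ G ∈ reg, #(G.adjPairsFrom (graphBall G o r).toFinset) ^ 2 +
          #reg * (4 * d ^ 2 * (d - 1) ^ (r + 1)) := by
        rw [sum_add_distrib, sum_const, smul_eq_mul]
        gcongr
        exact sum_card_adjPairsAvoiding_le o r
    _ ≤ #reg * ((2 * d ^ 2 * (d - 1) ^ r) ^ 2 + 4 * d ^ 2 * (d - 1) ^ (r + 1)) := by
        grw [sum_le_sum fun G hG ↦
          pow_le_pow_left' ((mem_filter.mp hG).2.card_adjPairsFrom_graphBall_le hd) 2,
          sum_const, smul_eq_mul, mul_add]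
    _ ≤ #reg * (8 * d ^ 3 * (d - 1) ^ (2 * r)) * d := by
        grw [hpow]
        exact le_of_eq (by ring)

end DoubleCounting

end SimpleGraph

lemma uniformOn_le_ofReal_of_card_mul_le {Ω : Type*} [Fintype Ω] [MeasurableSpace Ω]
    [MeasurableSingletonClass Ω] {p q : Ω → Prop} [DecidablePred p] [DecidablePred q] {m n : ℕ}
    (hn : n ≠ 0) (h : #({ω | p ω ∧ q ω} : Finset Ω) * n ≤ #({ω | p ω} : Finset Ω) * m) :
    uniformOn {ω | p ω} {ω | q ω} ≤ ENNReal.ofReal (m / n) := by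
  have hp : {ω | p ω} = ((({ω | p ω} : Finset Ω)) : Set Ω) := by simp
  have hq : {ω | q ω} = ((({ω | q ω} : Finset Ω)) : Set Ω) := by simp
  have hpq : ({ω | p ω} : Finset Ω) ∩ ({ω | q ω} : Finset Ω) =
      ({ω | p ω ∧ q ω} : Finset Ω) := by ext; simp
  rw [hp, hq, uniformOn_apply_finset, hpq,
    ENNReal.ofReal_div_of_pos (by positivity), ENNReal.ofReal_natCast, ENNReal.ofReal_natCast]
  refine ENNReal.div_le_of_le_mul ?_
  rw [← ENNReal.mul_div_right_comm, mul_comm, ENNReal.le_div_iff_mul_le (by simpa using Or.inl hn)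
    (Or.inl (ENNReal.natCast_ne_top n))]
  exact_mod_cast h

theorem stmt10 (d : ℕ) (hd : 3 ≤ d) :
    ∃ C : ℝ, 0 < C ∧
      ∀ r : ℕ, 1 ≤ r →
        ∀ N : ℕ, ∀ _hN : d + 1 ≤ N, Even (N * d) → C ≤ (N : ℝ) →
          uniformOn {G : SimpleGraph (Fin N) | G.IsRegularOfDegree d}
              {G : SimpleGraph (Fin N) |
                ¬ (G.induce (graphBall G (⟨0, by omega⟩ : Fin N) r)).IsAcyclic} ≤
            ENNReal.ofReal (C * ((d : ℝ) - 1) ^ (2 * r) / N) := by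
  refine ⟨8 * d ^ 3, by positivity, fun r _ N hN _ _ ↦ ?_⟩
  have : MeasurableSingletonClass (SimpleGraph (Fin N)) :=
    ⟨fun _ ↦ MeasurableSpace.measurableSet_top⟩
  have hcount := SimpleGraph.card_not_isAcyclic_mul_card_le hd (⟨0, by omega⟩ : Fin N) r
  rw [Fintype.card_fin] at hcount
  refine (uniformOn_le_ofReal_of_card_mul_le
    (p := fun G : SimpleGraph (Fin N) ↦ G.IsRegularOfDegree d)
    (q := fun G ↦ ¬(G.induce (graphBall G ⟨0, by omega⟩ r)).IsAcyclic)
    (m := 8 * d ^ 3 * (d - 1) ^ (2 * r)) (n := N) (by omega) hcount).trans_eq ?_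
  congr 1
  push_cast [Nat.cast_sub (by omega : 1 ≤ d)]
  ring
end
end

section
/- Let 𝒢 be a simple graph on a finite vertex set 𝒱 in which every vertex has degree at most d, let A be its adjacency matrix, let v : 𝒱 → ℝ, let t > 0, and set H = −t·A + diag(v). Fix z = E + iη with η > 0 and set μ = log(1 + η/(4td)). Let X, Y ⊆ 𝒱 and let χ_X, χ_Y denote the diagonal 0–1 matrices projecting onto the coordinates in X and Y respectively. Suppose n ∈ ℕ is such that every x ∈ X and y ∈ Y are at graph distance at least n (vertices in different connected components count as being at distance at least n). Then the ℓ²→ℓ² operator norm satisfies ‖χ_X · (H − z·Id)^{−1} · χ_Y‖ ≤ (2/η)·exp(−μ·n). -/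
open Matrix
open scoped Classical Real

noncomputable section

/-!
Conjugate the resolvent by the diagonal weight `e^{μ f}`, where `f` is the graph distance to `Y`
truncated at `n`. Since `f` changes by at most one along an edge, the conjugated operator differs
from `H - z` by a matrix supported on edges with entries at most `t (e^μ - 1) = η / (4d)`, hence of
norm at most `η / 4` by the Schur test. As `H` is self-adjoint, `‖(H - z) φ‖ ≥ η ‖φ‖`, so the
conjugated resolvent has norm at most `(3η/4)⁻¹ ≤ 2/η`. Undoing the conjugation costs `e^{-μ n}` on
`X`, where `f = n`, and nothing on `Y`, where `f = 0`.
-/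

open scoped Matrix.Norms.L2Operator

theorem SimpleGraph.exists_cutoff_of_le_length {V : Type*} (G : SimpleGraph V) (X Y : Set V)
    (n : ℕ) (h : ∀ x ∈ X, ∀ y ∈ Y, ∀ p : G.Walk x y, n ≤ p.length) :
    ∃ f : V → ℕ, (∀ y ∈ Y, f y = 0) ∧ (∀ x ∈ X, f x = n) ∧
      ∀ x x', G.Adj x x' → |(f x : ℝ) - f x'| ≤ 1 := by
  -- `sInf (S x)` is the distance from `x` to `Y` truncated at `n`; the element `n` also keeps
  -- `S x` nonempty when `Y` is unreachable from `x`.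
  let S : V → Set ℕ := fun x => {k | k = n ∨ ∃ y ∈ Y, ∃ p : G.Walk x y, p.length = k}
  have hle : ∀ x, sInf (S x) ≤ n := fun x => Nat.sInf_le (Or.inl rfl)
  have hadj : ∀ x x', G.Adj x x' → sInf (S x) ≤ sInf (S x') + 1 := fun x x' hxx' => by
    obtain h' | ⟨y, hy, p, hp⟩ := Nat.sInf_mem (⟨n, Or.inl rfl⟩ : (S x').Nonempty)
    · exact (hle x).trans (h' ▸ Nat.le_succ _)
    · exact Nat.sInf_le (Or.inr ⟨y, hy, .cons hxx' p, by rw [Walk.length_cons, hp]⟩)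
  refine ⟨fun x => sInf (S x), fun y hy => ?_, fun x hx => ?_, fun x x' hxx' => ?_⟩
  · exact Nat.eq_zero_of_le_zero (Nat.sInf_le (Or.inr ⟨y, hy, .nil, rfl⟩))
  · refine le_antisymm (hle x) ?_
    obtain h' | ⟨y, hy, p, hp⟩ := Nat.sInf_mem (⟨n, Or.inl rfl⟩ : (S x).Nonempty)
    · exact h'.ge
    · exact hp.symm.trans_ge (h x hx y hy p)
  · have h₁ : ((sInf (S x) : ℕ) : ℝ) ≤ (sInf (S x') : ℕ) + 1 := by
      exact_mod_cast hadj x x' hxx'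
    have h₂ : ((sInf (S x') : ℕ) : ℝ) ≤ (sInf (S x) : ℕ) + 1 := by
      exact_mod_cast hadj x' x hxx'.symm
    exact abs_sub_le_iff.mpr ⟨by linarith, by linarith⟩

theorem LinearMap.IsSymmetric.abs_im_mul_norm_le {E : Type*} [NormedAddCommGroup E]
    [InnerProductSpace ℂ E] {T : E →ₗ[ℂ] E} (hT : T.IsSymmetric) (z : ℂ) (x : E) :
    |z.im| * ‖x‖ ≤ ‖T x - z • x‖ := by
  have him : (inner ℂ x (T x - z • x)).im = -z.im * ‖x‖ ^ 2 := by
    have hT0 : (inner ℂ x (T x)).im = 0 := hT.im_inner_self_apply x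
    have hxx : (inner ℂ x x).im = 0 := inner_self_im (𝕜 := ℂ) x
    have hxx' : (inner ℂ x x).re = ‖x‖ ^ 2 := inner_self_eq_norm_sq (𝕜 := ℂ) x
    rw [inner_sub_right, inner_smul_right, Complex.sub_im, hT0, Complex.mul_im, hxx, hxx']
    ring
  have hcs : |z.im| * ‖x‖ ^ 2 ≤ ‖x‖ * ‖T x - z • x‖ :=
    calc |z.im| * ‖x‖ ^ 2 = |(inner ℂ x (T x - z • x)).im| := by
          rw [him, abs_mul, abs_neg, abs_of_nonneg (sq_nonneg ‖x‖)]
      _ ≤ ‖inner ℂ x (T x - z • x)‖ := Complex.abs_im_le_norm _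
      _ ≤ ‖x‖ * ‖T x - z • x‖ := norm_inner_le_norm _ _
  rcases (norm_nonneg x).eq_or_lt with hx | hx
  · rw [← hx, mul_zero]; exact norm_nonneg _
  · nlinarith

namespace Matrix

variable {m n 𝕜 : Type*} [Fintype m] [Fintype n] [DecidableEq n] [RCLike 𝕜]

theorem sqrt_sum_norm_mulVec_sq_le (A : Matrix m n 𝕜) (ψ : n → 𝕜) :
    √(∑ i, ‖(A *ᵥ ψ) i‖ ^ 2) ≤ ‖A‖ * √(∑ i, ‖ψ i‖ ^ 2) := by
  simpa [EuclideanSpace.norm_eq] using A.l2_opNorm_mulVec (WithLp.toLp 2 ψ)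

theorem l2_opNorm_le_of_sum_norm_le (B : Matrix m n 𝕜) {r : ℝ} (hr : 0 ≤ r)
    (hrow : ∀ i, ∑ j, ‖B i j‖ ≤ r) (hcol : ∀ j, ∑ i, ‖B i j‖ ≤ r) : ‖B‖ ≤ r := by
  rw [l2_opNorm_def]
  refine ContinuousLinearMap.opNorm_le_bound _ hr fun x => ?_
  refine (sq_le_sq₀ (norm_nonneg _) (by positivity)).mp ?_
  rw [EuclideanSpace.norm_sq_eq, mul_pow, EuclideanSpace.norm_sq_eq]
  change ∑ i, ‖(B *ᵥ x.ofLp) i‖ ^ 2 ≤ _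
  have hrow_sq : ∀ i, ‖(B *ᵥ x.ofLp) i‖ ^ 2 ≤ r * ∑ j, ‖B i j‖ * ‖x j‖ ^ 2 := fun i =>
    calc ‖(B *ᵥ x.ofLp) i‖ ^ 2 ≤ (∑ j, ‖B i j‖ * ‖x j‖) ^ 2 := by
          gcongr
          exact (norm_sum_le _ _).trans_eq (by simp)
      _ ≤ (∑ j, ‖B i j‖) * ∑ j, ‖B i j‖ * ‖x j‖ ^ 2 :=
          Finset.sum_sq_le_sum_mul_sum_of_sq_le_mul _ (fun _ _ => by positivity)
            (fun _ _ => by positivity) fun _ _ => by ring_nf; rfl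
      _ ≤ r * ∑ j, ‖B i j‖ * ‖x j‖ ^ 2 := by gcongr; exact hrow i
  calc _ ≤ ∑ i, r * ∑ j, ‖B i j‖ * ‖x j‖ ^ 2 := Finset.sum_le_sum fun i _ => hrow_sq i
    _ = r * ∑ j, (∑ i, ‖B i j‖) * ‖x j‖ ^ 2 := by
          rw [← Finset.mul_sum, Finset.sum_comm]; simp only [Finset.sum_mul]
    _ ≤ r * ∑ j, r * ‖x j‖ ^ 2 := by gcongr with j; exact hcol j
    _ = r ^ 2 * ∑ j, ‖x j‖ ^ 2 := by rw [← Finset.mul_sum]; ring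

theorem l2_opNorm_diagonal_le {v : n → 𝕜} {c : ℝ} (hc : 0 ≤ c) (hv : ∀ i, ‖v i‖ ≤ c) :
    ‖diagonal v‖ ≤ c :=
  (l2_opNorm_diagonal v).trans_le ((pi_norm_le_iff_of_nonneg hc).mpr hv)

theorem l2_opNorm_inv_le_of_mul_norm_le (A : Matrix n n 𝕜) {c : ℝ} (hc : 0 < c)
    (h : ∀ x, c * ‖x‖ ≤ ‖toEuclideanCLM (n := n) (𝕜 := 𝕜) A x‖) : ‖A⁻¹‖ ≤ c⁻¹ := by
  have hinj : Function.Injective A.mulVec := by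
    refine (injective_iff_map_eq_zero' A.mulVecLin).mpr fun v => ⟨fun hv => ?_, fun hv => ?_⟩
    · have hv' := h (WithLp.toLp 2 v)
      rw [toEuclideanCLM_toLp, show A *ᵥ v = 0 from hv, WithLp.toLp_zero, norm_zero] at hv'
      have : ‖WithLp.toLp 2 v‖ = 0 := le_antisymm (by nlinarith) (norm_nonneg _)
      simpa using this
    · simp [hv]
  have hAA : A * A⁻¹ = 1 :=
    mul_nonsing_inv A ((isUnit_iff_isUnit_det A).mp (mulVec_injective_iff_isUnit.mp hinj))
  rw [← l2_opNorm_toEuclideanCLM]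
  refine ContinuousLinearMap.opNorm_le_bound _ (inv_nonneg.mpr hc.le) fun y => ?_
  rw [inv_mul_eq_div, le_div_iff₀' hc]
  calc _ ≤ _ := h _
    _ = ‖y‖ := by
      rw [← ContinuousLinearMap.comp_apply, ← ContinuousLinearMap.mul_def, ← map_mul, hAA,
        map_one]
      rfl

theorem IsHermitian.abs_im_mul_norm_le {H : Matrix n n ℂ} (hH : H.IsHermitian) (z : ℂ)
    (x : EuclideanSpace ℂ n) :
    |z.im| * ‖x‖ ≤ ‖toEuclideanCLM (n := n) (𝕜 := ℂ) (H - z • 1) x‖ := by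
  have hx : toEuclideanCLM (n := n) (𝕜 := ℂ) (H - z • 1) x = toEuclideanLin H x - z • x := by
    rw [map_sub, map_smul, map_one]; rfl
  exact hx ▸ (isSymmetric_toEuclideanLin_iff.mpr hH).abs_im_mul_norm_le z x

theorem IsHermitian.l2_opNorm_inv_sub_smul_add_le {H : Matrix n n ℂ} (hH : H.IsHermitian)
    (z : ℂ) {B : Matrix n n ℂ} {b : ℝ} (hB : ‖B‖ ≤ b) (hb : b < |z.im|) :
    ‖(H - z • 1 + B)⁻¹‖ ≤ (|z.im| - b)⁻¹ := by
  refine l2_opNorm_inv_le_of_mul_norm_le _ (sub_pos.mpr hb) fun x => ?_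
  have hBx : ‖toEuclideanCLM (n := n) (𝕜 := ℂ) B x‖ ≤ b * ‖x‖ :=
    (ContinuousLinearMap.le_opNorm _ _).trans (mul_le_mul_of_nonneg_right hB (norm_nonneg _))
  rw [map_add, FunLike.coe_add, Pi.add_apply]
  linarith [hH.abs_im_mul_norm_le z x, norm_le_add_norm_add
    (toEuclideanCLM (n := n) (𝕜 := ℂ) (H - z • 1) x) (toEuclideanCLM (n := n) (𝕜 := ℂ) B x)]

theorem l2_opNorm_mul_inv_mul_le_of_mul_eq_one (K D D' P Q : Matrix n n 𝕜)
    (hDD' : D * D' = 1) : ‖P * K⁻¹ * Q‖ ≤ ‖P * D'‖ * ‖(D * K * D')⁻¹‖ * ‖D * Q‖ := by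
  have hD'D : D' * D = 1 := mul_eq_one_comm.mp hDD'
  have hK : K⁻¹ = D' * (D * K * D')⁻¹ * D := by
    rw [mul_inv_rev, mul_inv_rev, inv_eq_left_inv hDD', inv_eq_left_inv hD'D]
    simp only [← Matrix.mul_assoc, hD'D, Matrix.one_mul]
    rw [Matrix.mul_assoc, hD'D, Matrix.mul_one]
  calc ‖P * K⁻¹ * Q‖ = ‖P * D' * (D * K * D')⁻¹ * (D * Q)‖ := by
        simp only [hK, Matrix.mul_assoc]
    _ ≤ _ := (l2_opNorm_mul _ _).trans (by gcongr; exact l2_opNorm_mul _ _)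

theorem diagonal_exp_mul_diagonal_exp_neg (g : n → ℝ) :
    diagonal (fun i => Complex.exp ↑(g i)) * diagonal (fun i => Complex.exp ↑(-g i)) = 1 := by
  simp [diagonal_mul_diagonal, ← Complex.exp_add]

theorem conj_diagonal_exp_sub_apply (K : Matrix n n ℂ) (g : n → ℝ) (x y : n) :
    (diagonal (fun i => Complex.exp ↑(g i)) * K * diagonal (fun i => Complex.exp ↑(-g i)) - K) x y
      = (Complex.exp ↑(g x - g y) - 1) * K x y := by
  rw [sub_apply, mul_diagonal, diagonal_mul, sub_eq_add_neg (g x), Complex.ofReal_add,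
    Complex.exp_add]
  ring

theorem l2_opNorm_diagonal_ite_mul_diagonal_exp_le (s : Set n) (g : n → ℝ) {c : ℝ}
    (hg : ∀ i ∈ s, g i ≤ c) :
    ‖diagonal (fun i => if i ∈ s then (1 : ℂ) else 0) * diagonal (fun i => Complex.exp ↑(g i))‖ ≤
      Real.exp c := by
  rw [diagonal_mul_diagonal]
  refine l2_opNorm_diagonal_le (Real.exp_nonneg c) fun i => ?_
  by_cases hi : i ∈ s
  · simpa [hi, Complex.norm_exp] using hg i hi
  · simp [hi, Real.exp_nonneg]

end Matrix

namespace SimpleGraph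

section Hamiltonian

variable {V : Type*} [DecidableEq V] (G : SimpleGraph V) [DecidableRel G.Adj]

theorem isHermitian_map_ofReal_smul_adjMatrix_add_diagonal (t : ℝ) (v : V → ℝ) :
    (((-t) • G.adjMatrix ℝ + diagonal v).map (fun r => (r : ℂ))).IsHermitian :=
  IsHermitian.map (isHermitian_iff_isSymm.mpr
    ((G.isSymm_adjMatrix.smul (-t)).add (isSymm_diagonal v))) _
    fun r => (Complex.conj_ofReal r).symm

theorem norm_map_ofReal_smul_adjMatrix_add_diagonal_sub_smul_apply (t : ℝ) (v : V → ℝ) (z : ℂ)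
    {x y : V} (hxy : x ≠ y) :
    ‖(((-t) • G.adjMatrix ℝ + diagonal v).map (fun r => (r : ℂ)) - z • 1) x y‖ =
      if G.Adj x y then |t| else 0 := by
  simp only [Matrix.sub_apply, map_apply, Matrix.add_apply, Matrix.smul_apply,
    diagonal_apply_ne _ hxy, one_apply_ne hxy, adjMatrix_apply, smul_zero, sub_zero, add_zero]
  split_ifs <;> simp

end Hamiltonian

variable {V 𝕜 : Type*} [Fintype V] [DecidableEq V] [RCLike 𝕜] (G : SimpleGraph V)
  [DecidableRel G.Adj] {d : ℕ}

theorem l2_opNorm_le_of_norm_le_adj (hdeg : ∀ v, G.degree v ≤ d) (B : Matrix V V 𝕜) {c : ℝ}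
    (hc : 0 ≤ c) (hB : ∀ x y, ‖B x y‖ ≤ if G.Adj x y then c else 0) : ‖B‖ ≤ c * d := by
  have hsum : ∀ x, ∑ y, (if G.Adj x y then c else 0) ≤ c * d := fun x => by
    rw [Finset.sum_ite, Finset.sum_const_zero, add_zero, Finset.sum_const,
      ← neighborFinset_eq_filter, card_neighborFinset_eq_degree, nsmul_eq_mul, mul_comm]
    exact mul_le_mul_of_nonneg_left (by exact_mod_cast hdeg x) hc
  refine B.l2_opNorm_le_of_sum_norm_le (by positivity)
    (fun x => (Finset.sum_le_sum fun y _ => hB x y).trans (hsum x))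
    (fun y => (Finset.sum_le_sum fun x _ => ?_).trans (hsum y))
  simpa only [G.adj_comm] using hB x y

theorem l2_opNorm_conj_diagonal_exp_sub_le (hdeg : ∀ v, G.degree v ≤ d) (K : Matrix V V ℂ)
    {t μ : ℝ} (ht : 0 ≤ t) (hμ : 0 ≤ μ)
    (hK : ∀ x y, x ≠ y → ‖K x y‖ ≤ if G.Adj x y then t else 0)
    (g : V → ℝ) (hg : ∀ x y, G.Adj x y → |g x - g y| ≤ μ) :
    ‖diagonal (fun i => Complex.exp ↑(g i)) * K * diagonal (fun i => Complex.exp ↑(-g i)) - K‖ ≤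
      (Real.exp μ - 1) * t * d := by
  have hc : 0 ≤ (Real.exp μ - 1) * t := mul_nonneg (by simp [hμ]) ht
  refine G.l2_opNorm_le_of_norm_le_adj hdeg _ hc fun x y => ?_
  rw [conj_diagonal_exp_sub_apply, norm_mul]
  obtain rfl | hxy := eq_or_ne x y
  · simp only [sub_self, Complex.ofReal_zero, Complex.exp_zero, norm_zero, zero_mul]
    split_ifs <;> simp [hc]
  have hexp : ‖Complex.exp ↑(g x - g y) - 1‖ ≤ Real.exp |g x - g y| - 1 := by
    have := Complex.norm_exp_sub_sum_le_exp_norm_sub_sum (↑(g x - g y)) 1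
    simpa only [Finset.sum_range_one, pow_zero, Nat.factorial_zero, Nat.cast_one, div_one,
      Complex.norm_real, Real.norm_eq_abs] using this
  have hKxy := hK x y hxy
  split_ifs at hKxy ⊢ with hadj
  · exact mul_le_mul (hexp.trans (by gcongr; exact hg x y hadj)) hKxy (norm_nonneg _)
      (by simp [hμ])
  · rw [le_antisymm hKxy (norm_nonneg _), mul_zero]

theorem l2_opNorm_inv_conj_diagonal_exp_le (hdeg : ∀ v, G.degree v ≤ d) {t μ : ℝ} (ht : 0 ≤ t)
    (hμ : 0 ≤ μ) (v : V → ℝ) (z : ℂ) (hz : (Real.exp μ - 1) * t * d < |z.im|)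
    (g : V → ℝ) (hg : ∀ x y, G.Adj x y → |g x - g y| ≤ μ) :
    ‖(diagonal (fun i => Complex.exp ↑(g i)) *
        (((-t) • G.adjMatrix ℝ + diagonal v).map (fun r => (r : ℂ)) - z • 1) *
        diagonal (fun i => Complex.exp ↑(-g i)))⁻¹‖ ≤ (|z.im| - (Real.exp μ - 1) * t * d)⁻¹ := by
  have hB := G.l2_opNorm_conj_diagonal_exp_sub_le hdeg _ ht hμ (fun x y hxy => by
    rw [G.norm_map_ofReal_smul_adjMatrix_add_diagonal_sub_smul_apply t v z hxy, abs_of_nonneg ht])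
    g hg
  have hH := G.isHermitian_map_ofReal_smul_adjMatrix_add_diagonal t v
  simpa only [add_sub_cancel] using hH.l2_opNorm_inv_sub_smul_add_le z hB hz

end SimpleGraph

theorem stmt11 (V : Type*) [Fintype V] [DecidableEq V] (d : ℕ) (hd : 0 < d)
    (G : SimpleGraph V) (hdeg : ∀ v : V, G.degree v ≤ d)
    (vpot : V → ℝ) (t : ℝ) (ht : 0 < t) (E η : ℝ) (hη : 0 < η)
    (X Y : Set V) (n : ℕ)
    (hdist : ∀ x ∈ X, ∀ y ∈ Y, ∀ p : G.Walk x y, n ≤ p.length) :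
    ∀ ψ : V → ℂ,
      Real.sqrt (∑ i, norm
          ((Matrix.diagonal (fun v => if v ∈ X then (1 : ℂ) else 0) *
            (((-t) • G.adjMatrix ℝ + Matrix.diagonal vpot).map (fun x => (x : ℂ)) -
              (E + η * Complex.I) • 1)⁻¹ *
            Matrix.diagonal (fun v => if v ∈ Y then (1 : ℂ) else 0)).mulVec ψ i) ^ 2) ≤
        2 / η * Real.exp (-(Real.log (1 + η / (4 * t * d))) * n) *
          Real.sqrt (∑ i, norm (ψ i) ^ 2) := by
  intro ψ
  obtain ⟨f, hfY, hfX, hf⟩ := G.exists_cutoff_of_le_length X Y n hdist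
  set μ := Real.log (1 + η / (4 * t * d))
  have hμ0 : 0 ≤ μ := Real.log_nonneg (le_add_of_nonneg_right (by positivity))
  have hμ : (Real.exp μ - 1) * t * d = η / 4 := by
    rw [Real.exp_log (by positivity)]; field_simp; ring
  set g : V → ℝ := fun x => μ * f x
  have hg : ∀ x y, G.Adj x y → |g x - g y| ≤ μ := fun x y hxy => by
    rw [← mul_sub, abs_mul, abs_of_nonneg hμ0]
    exact mul_le_of_le_one_right hμ0 (hf x y hxy)
  have hz : |((E : ℂ) + η * Complex.I).im| = η := by simp [abs_of_pos hη]
  have hM := G.l2_opNorm_inv_conj_diagonal_exp_le hdeg ht.le hμ0 vpot (E + η * Complex.I)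
    (by linarith) g hg
  rw [hμ, hz] at hM
  replace hM := hM.trans (show (η - η / 4)⁻¹ ≤ 2 / η by rw [← inv_div η 2]; gcongr; linarith)
  have hX := l2_opNorm_diagonal_ite_mul_diagonal_exp_le X (fun i => -g i) (c := -μ * n)
    fun x hx => by simp [g, hfX x hx]
  have hY := l2_opNorm_diagonal_ite_mul_diagonal_exp_le Y g (c := 0)
    fun y hy => by simp [g, hfY y hy]
  rw [Real.exp_zero, (commute_diagonal _ _).eq] at hY
  refine (sqrt_sum_norm_mulVec_sq_le _ ψ).trans (mul_le_mul_of_nonneg_right ?_ (by positivity))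
  calc _ ≤ _ :=
        l2_opNorm_mul_inv_mul_le_of_mul_eq_one _ _ _ _ _ (diagonal_exp_mul_diagonal_exp_neg g)
    _ ≤ Real.exp (-μ * n) * (2 / η) * 1 := by gcongr
    _ = 2 / η * Real.exp (-μ * n) := by ring
end
end

section
/- Let d ≥ 10 be an integer, and let C₁ ≥ 1, C₂ > 0, p* ∈ (0,1), y* > 0, and ε₁ ∈ (0,1] be reals. Let F : (0,∞) → [0,1] be a nondecreasing function such that F(y*) ≤ 1 − p* and F(ε) ≤ F(C₁·ε^{1/3})^{d−1} + C₂·ε^{1/3} for all ε ∈ (0, ε₁]. Then there exists ε* ∈ (0,1] (depending on d, C₁, C₂, p*, y*, ε₁) such that F(ε) ≤ ε^{31/301} for all ε ∈ (0, ε*]. -/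
/-!
Along the scales `τₙ = C₁² θ^(3ⁿ)` the recursion gives `xₙ₊₁ ≤ xₙ⁹ + C₁ C₂ θ^(3ⁿ)` for
`xₙ = F τₙ`. As long as the additive term is negligible, `xₙ` decays like an iterated ninth
power, started below `1` by the seed bound, and this eventually beats the iterated cubes
`θ^(3ⁿ)`; so some `xₙ₊₁ ≤ K θ^(3ⁿ)`, and this bound propagates because `(K θ^(3ⁿ))⁹` is tiny
compared with `θ^(3ⁿ⁺¹)`. Monotonicity of `F` between consecutive scales then gives
`F ε ≤ K ε^(1/9)`, and `1/9 > 31/301`.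
-/

lemma pow_eight_le_of_le_mul_pow_nine {x : ℕ → ℝ} {r : ℝ} (hx : ∀ n, 0 ≤ x n) (hr : 0 ≤ r)
    (h : ∀ n, x (n + 1) ≤ r * x n ^ 9) (n : ℕ) : r * x n ^ 8 ≤ (r * x 0 ^ 8) ^ 9 ^ n := by
  induction n with
  | zero => simp
  | succ n ih =>
    calc r * x (n + 1) ^ 8 ≤ r * (r * x n ^ 9) ^ 8 := by gcongr; exacts [hx _, h n]
      _ = (r * x n ^ 8) ^ 9 := by ring
      _ ≤ ((r * x 0 ^ 8) ^ 9 ^ n) ^ 9 := by gcongr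
      _ = (r * x 0 ^ 8) ^ 9 ^ (n + 1) := by rw [← pow_mul, ← pow_succ]

lemma exists_le_of_le_pow_nine_add {x : ℕ → ℝ} {c K θ : ℝ} (hx : ∀ n, 0 ≤ x n) (hc : 0 ≤ c)
    (hK : 1 + c ≤ K) (hθ : 0 < θ) (hx0 : K * x 0 ^ 8 < K - c)
    (hrec : ∀ n, x (n + 1) ≤ x n ^ 9 + c * θ ^ 3 ^ n) : ∃ n, x (n + 1) ≤ K * θ ^ 3 ^ n := by
  by_contra! hfail
  have hKc : 0 < K - c := by linarith
  -- while the scale term is dominated, `x` decays doubly exponentially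
  obtain ⟨r, hr, hdecay, hρ⟩ : ∃ r, 1 ≤ r ∧ (∀ n, x (n + 1) ≤ r * x n ^ 9) ∧ r * x 0 ^ 8 < 1 := by
    refine ⟨K / (K - c), by rw [le_div_iff₀ hKc]; linarith, fun n => ?_, ?_⟩
    · rw [div_mul_eq_mul_div, le_div_iff₀ hKc]
      nlinarith [hrec n, hfail n]
    · rwa [div_mul_eq_mul_div, div_lt_one hKc]
  set ρ := r * x 0 ^ 8
  have hρ0 : 0 ≤ ρ := by positivity
  obtain ⟨n, hn⟩ := exists_pow_lt_of_lt_one (pow_pos hθ 8) hρ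
  have key : (θ ^ 8) ^ 3 ^ n < (ρ ^ 3 ^ n) ^ 3 ^ n := calc
    (θ ^ 8) ^ 3 ^ n = (θ ^ 3 ^ n) ^ 8 := by rw [← pow_mul, ← pow_mul, mul_comm]
    _ ≤ (K * θ ^ 3 ^ n) ^ 8 := by gcongr; exact le_mul_of_one_le_left (by positivity) (by linarith)
    _ < x (n + 1) ^ 8 :=
      pow_lt_pow_left₀ (hfail n) (mul_nonneg (by linarith) (by positivity)) (by norm_num)
    _ ≤ r * x (n + 1) ^ 8 := le_mul_of_one_le_left (by positivity) hr
    _ ≤ ρ ^ 9 ^ (n + 1) := pow_eight_le_of_le_mul_pow_nine hx (by positivity) hdecay _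
    _ ≤ ρ ^ 9 ^ n := pow_le_pow_of_le_one hρ0 hρ.le (Nat.pow_le_pow_right (by norm_num) n.le_succ)
    _ = (ρ ^ 3 ^ n) ^ 3 ^ n := by rw [← pow_mul, ← mul_pow]; norm_num
  have h1 := lt_of_pow_lt_pow_left₀ _ (by positivity) key
  have h2 : ρ ^ 3 ^ n ≤ ρ ^ n := pow_le_pow_of_le_one hρ0 hρ.le (Nat.lt_pow_self (by norm_num)).le
  linarith

lemma le_mul_pow_three_pow_succ {x : ℕ → ℝ} {c K θ : ℝ} (hc : 0 ≤ c) (hK : 1 + c ≤ K) (hθ0 : 0 < θ)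
    (hθ1 : θ ≤ 1) (hKθ : K ^ 9 * θ ^ 2 ≤ 1) (hrec : ∀ n, x (n + 1) ≤ x n ^ 9 + c * θ ^ 3 ^ n)
    {n : ℕ} (hx : 0 ≤ x (n + 1)) (hn : x (n + 1) ≤ K * θ ^ 3 ^ n) :
    x (n + 2) ≤ K * θ ^ 3 ^ (n + 1) := by
  have ht : 0 ≤ θ ^ 3 ^ (n + 1) := by positivity
  have htθ : θ ^ 3 ^ (n + 1) ≤ θ := pow_le_of_le_one hθ0.le hθ1 (by positivity)
  have hK0 : 0 ≤ K := by linarith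
  calc x (n + 2) ≤ x (n + 1) ^ 9 + c * θ ^ 3 ^ (n + 1) := hrec (n + 1)
    _ ≤ (K * θ ^ 3 ^ n) ^ 9 + c * θ ^ 3 ^ (n + 1) := by gcongr
    _ = K ^ 9 * (θ ^ 3 ^ (n + 1)) ^ 2 * θ ^ 3 ^ (n + 1) + c * θ ^ 3 ^ (n + 1) := by
      rw [pow_succ 3 n, pow_mul]; ring
    _ ≤ K ^ 9 * θ ^ 2 * θ ^ 3 ^ (n + 1) + c * θ ^ 3 ^ (n + 1) := by gcongr
    _ ≤ K * θ ^ 3 ^ (n + 1) := by nlinarith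

lemma exists_forall_ge_le_of_le_pow_nine_add {x : ℕ → ℝ} {c K θ : ℝ} (hx : ∀ n, 0 ≤ x n)
    (hc : 0 ≤ c) (hK : 1 + c ≤ K) (hθ0 : 0 < θ) (hθ1 : θ ≤ 1) (hKθ : K ^ 9 * θ ^ 2 ≤ 1)
    (hx0 : K * x 0 ^ 8 < K - c) (hrec : ∀ n, x (n + 1) ≤ x n ^ 9 + c * θ ^ 3 ^ n) :
    ∃ N, ∀ n ≥ N, x (n + 1) ≤ K * θ ^ 3 ^ n := by
  obtain ⟨N, hN⟩ := exists_le_of_le_pow_nine_add hx hc hK hθ0 hx0 hrec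
  refine ⟨N, fun n hn => ?_⟩
  induction n, hn using Nat.le_induction with
  | base => exact hN
  | succ n _ ih => exact le_mul_pow_three_pow_succ hc hK hθ0 hθ1 hKθ hrec (hx _) ih

lemma exists_mem_Ioc_of_antitone {u : ℕ → ℝ} (hu : Antitone u) {ε : ℝ} (hε : ∃ n, u n < ε)
    {N : ℕ} (hN : ε ≤ u N) : ∃ n ≥ N, u (n + 1) < ε ∧ ε ≤ u n := by
  by_contra! h
  have hge : ∀ n ≥ N, ε ≤ u n := fun n hn => by
    induction n, hn using Nat.le_induction with
    | base => exact hN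
    | succ n hn ih => exact not_lt.mp fun hlt => (h n hn hlt).not_ge ih
  obtain ⟨m, hm⟩ := hε
  linarith [hge (max m N) (le_max_right _ _), hu (le_max_left m N)]

lemma rpow_one_third_le {ε s : ℝ} (hε : 0 ≤ ε) (hs : 0 ≤ s) (h : ε ≤ s ^ 3) :
    ε ^ ((1 : ℝ) / 3) ≤ s := by
  rw [one_div, Real.rpow_inv_le_iff_of_pos hε hs (by norm_num)]
  exact_mod_cast h

lemma lt_rpow_one_ninth {ε s : ℝ} (hε : 0 ≤ ε) (hs : 0 ≤ s) (h : s ^ 9 < ε) :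
    s < ε ^ ((1 : ℝ) / 9) := by
  rw [one_div, Real.lt_rpow_inv_iff_of_pos hs hε (by norm_num)]
  exact_mod_cast h

lemma mul_rpow_le_rpow_of_le {K a b ε : ℝ} (hK : 0 < K) (hab : a < b) (hε : 0 < ε)
    (hεK : ε ≤ K⁻¹ ^ (b - a)⁻¹) : K * ε ^ b ≤ ε ^ a := by
  have hsmall : ε ^ (b - a) ≤ K⁻¹ := by
    calc ε ^ (b - a) ≤ (K⁻¹ ^ (b - a)⁻¹) ^ (b - a) :=
          Real.rpow_le_rpow hε.le hεK (by linarith)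
      _ = K⁻¹ := Real.rpow_inv_rpow (by positivity) (by linarith)
  calc K * ε ^ b = K * ε ^ (b - a) * ε ^ a := by
        rw [mul_assoc, ← Real.rpow_add hε, sub_add_cancel]
    _ ≤ K * K⁻¹ * ε ^ a := by gcongr
    _ = ε ^ a := by rw [mul_inv_cancel₀ hK.ne', one_mul]

lemma le_pow_nine_add_of_rec {F : ℝ → ℝ} {d : ℕ} {C₁ C₂ ε₁ : ℝ} (hd : 10 ≤ d) (hC₁ : 1 ≤ C₁)
    (hC₂ : 0 ≤ C₂) (hF01 : ∀ x : ℝ, 0 < x → F x ∈ Set.Icc (0 : ℝ) 1)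
    (hmono : ∀ x y : ℝ, 0 < x → x ≤ y → F x ≤ F y)
    (hrec : ∀ ε : ℝ, 0 < ε → ε ≤ ε₁ →
      F ε ≤ F (C₁ * ε ^ ((1 : ℝ) / 3)) ^ (d - 1) + C₂ * ε ^ ((1 : ℝ) / 3))
    {t : ℝ} (ht : 0 < t) (htε : C₁ ^ 2 * t ^ 3 ≤ ε₁) :
    F (C₁ ^ 2 * t ^ 3) ≤ F (C₁ ^ 2 * t) ^ 9 + C₁ * C₂ * t := by
  have hC₁0 : 0 < C₁ := by linarith
  have hroot : (C₁ ^ 2 * t ^ 3) ^ ((1 : ℝ) / 3) ≤ C₁ * t := by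
    refine rpow_one_third_le (by positivity) (by positivity) ?_
    rw [mul_pow]
    gcongr ?_ * _
    exact pow_le_pow_right₀ hC₁ (by norm_num)
  set u := C₁ * (C₁ ^ 2 * t ^ 3) ^ ((1 : ℝ) / 3)
  have hu : 0 < u := by positivity
  have huτ : u ≤ C₁ ^ 2 * t := by
    calc u ≤ C₁ * (C₁ * t) := mul_le_mul_of_nonneg_left hroot hC₁0.le
      _ = C₁ ^ 2 * t := by ring
  obtain ⟨hFu0, hFu1⟩ := hF01 u hu
  calc F (C₁ ^ 2 * t ^ 3) ≤ F u ^ (d - 1) + C₂ * (C₁ ^ 2 * t ^ 3) ^ ((1 : ℝ) / 3) :=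
        hrec _ (by positivity) htε
    _ ≤ F u ^ 9 + C₂ * (C₁ * t) :=
        add_le_add (pow_le_pow_of_le_one hFu0 hFu1 (by omega)) (mul_le_mul_of_nonneg_left hroot hC₂)
    _ ≤ F (C₁ ^ 2 * t) ^ 9 + C₁ * C₂ * t := by
        rw [mul_left_comm, ← mul_assoc]
        exact add_le_add_left (pow_le_pow_left₀ hFu0 (hmono _ _ hu huτ) 9) _

lemma le_mul_rpow_one_ninth_of_le_on_scales {F : ℝ → ℝ} {C₁ K θ : ℝ}
    (hmono : ∀ x y : ℝ, 0 < x → x ≤ y → F x ≤ F y) (hC₁ : 1 ≤ C₁) (hK : 0 ≤ K) (hθ0 : 0 < θ)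
    (hθ1 : θ < 1) {N : ℕ} (hN : ∀ n ≥ N, F (C₁ ^ 2 * θ ^ 3 ^ (n + 1)) ≤ K * θ ^ 3 ^ n)
    {ε : ℝ} (hε : 0 < ε) (hεN : ε ≤ C₁ ^ 2 * θ ^ 3 ^ (N + 1)) :
    F ε ≤ K * ε ^ ((1 : ℝ) / 9) := by
  have hC₁2 : 1 ≤ C₁ ^ 2 := one_le_pow₀ hC₁
  have hanti : Antitone fun n : ℕ => C₁ ^ 2 * θ ^ 3 ^ (n + 1) := fun m n hmn => by
    dsimp only
    gcongr C₁ ^ 2 * ?_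
    exact pow_le_pow_of_le_one hθ0.le hθ1.le (Nat.pow_le_pow_right (by norm_num) (by omega))
  have hsmall : ∃ n, C₁ ^ 2 * θ ^ 3 ^ (n + 1) < ε := by
    obtain ⟨n, hn⟩ := exists_pow_lt_of_lt_one (div_pos hε (by positivity : (0 : ℝ) < C₁ ^ 2)) hθ1
    refine ⟨n, ?_⟩
    rw [← lt_div_iff₀' (by positivity)]
    refine (pow_le_pow_of_le_one hθ0.le hθ1.le ?_).trans_lt hn
    exact (Nat.lt_pow_self (by norm_num)).le.trans (Nat.pow_le_pow_right (by norm_num) n.le_succ)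
  obtain ⟨n, hnN, hlow, hup⟩ := exists_mem_Ioc_of_antitone hanti hsmall hεN
  have hθn : θ ^ 3 ^ n < ε ^ ((1 : ℝ) / 9) := by
    refine lt_rpow_one_ninth hε.le (by positivity) (lt_of_le_of_lt ?_ hlow)
    calc (θ ^ 3 ^ n) ^ 9 = θ ^ 3 ^ (n + 1 + 1) := by rw [← pow_mul, pow_succ, pow_succ]; ring
      _ ≤ C₁ ^ 2 * θ ^ 3 ^ (n + 1 + 1) := le_mul_of_one_le_left (by positivity) hC₁2
  calc F ε ≤ F (C₁ ^ 2 * θ ^ 3 ^ (n + 1)) := hmono _ _ hε hup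
    _ ≤ K * θ ^ 3 ^ n := hN n hnN
    _ ≤ K * ε ^ ((1 : ℝ) / 9) := by gcongr

lemma exists_le_mul_rpow_one_ninth {F : ℝ → ℝ} {d : ℕ} {C₁ C₂ ystar ε₁ : ℝ} (hd : 10 ≤ d)
    (hC₁ : 1 ≤ C₁) (hC₂ : 0 ≤ C₂) (hy : 0 < ystar) (hε₁ : 0 < ε₁)
    (hF01 : ∀ x : ℝ, 0 < x → F x ∈ Set.Icc (0 : ℝ) 1)
    (hmono : ∀ x y : ℝ, 0 < x → x ≤ y → F x ≤ F y) (hseed : F ystar < 1)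
    (hrec : ∀ ε : ℝ, 0 < ε → ε ≤ ε₁ →
      F ε ≤ F (C₁ * ε ^ ((1 : ℝ) / 3)) ^ (d - 1) + C₂ * ε ^ ((1 : ℝ) / 3)) :
    ∃ K ε₀ : ℝ, 0 < K ∧ 0 < ε₀ ∧ ∀ ε, 0 < ε → ε ≤ ε₀ → F ε ≤ K * ε ^ ((1 : ℝ) / 9) := by
  set c := C₁ * C₂
  have hc : 0 ≤ c := by positivity
  set q := F ystar
  have hq8 : 0 < 1 - q ^ 8 := sub_pos.2 (pow_lt_one₀ (hF01 _ hy).1 hseed (by norm_num))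
  set K := 1 + c / (1 - q ^ 8)
  have hK : 1 + c ≤ K := by
    have := le_div_self hc hq8 (by linarith [pow_nonneg (hF01 _ hy).1 8])
    show 1 + c ≤ 1 + c / (1 - q ^ 8)
    linarith
  set θ := min (min ε₁ ystar / C₁ ^ 2) (1 / (2 * K ^ 9))
  have hK9 : 1 ≤ K ^ 9 := one_le_pow₀ (by linarith)
  have hθ0 : 0 < θ := by positivity
  have hθK : K ^ 9 * θ ≤ 1 / 2 := by
    rw [← le_div_iff₀' (by positivity), div_div]
    exact min_le_right _ _
  have hθ1 : θ < 1 := by nlinarith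
  have hKθ : K ^ 9 * θ ^ 2 ≤ 1 := by nlinarith
  have hscale : ∀ n, C₁ ^ 2 * θ ^ 3 ^ n ≤ min ε₁ ystar := fun n => by
    rw [← le_div_iff₀' (by positivity)]
    exact (pow_le_of_le_one hθ0.le hθ1.le (by positivity)).trans (min_le_left _ _)
  set x : ℕ → ℝ := fun n => F (C₁ ^ 2 * θ ^ 3 ^ n)
  have hx : ∀ n, 0 ≤ x n := fun n => (hF01 _ (by positivity)).1
  have hxrec : ∀ n, x (n + 1) ≤ x n ^ 9 + c * θ ^ 3 ^ n := fun n => by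
    have h := le_pow_nine_add_of_rec hd hC₁ hC₂ hF01 hmono hrec (t := θ ^ 3 ^ n) (by positivity)
      (by rw [← pow_mul, ← pow_succ]; exact (hscale _).trans (min_le_left _ _))
    rwa [← pow_mul, ← pow_succ] at h
  have hx0 : K * x 0 ^ 8 < K - c := by
    have hx0q : x 0 ≤ q := hmono _ _ (by positivity) ((hscale 0).trans (min_le_right _ _))
    have hKq : K * (1 - q ^ 8) = 1 - q ^ 8 + c := by
      rw [mul_comm, mul_add, mul_one, mul_div_cancel₀ _ hq8.ne']
    nlinarith [pow_le_pow_left₀ (hx 0) hx0q 8]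
  obtain ⟨N, hN⟩ :=
    exists_forall_ge_le_of_le_pow_nine_add hx hc hK hθ0 hθ1.le hKθ hx0 hxrec
  exact ⟨K, C₁ ^ 2 * θ ^ 3 ^ (N + 1), by linarith, by positivity,
    fun ε hε hεN => le_mul_rpow_one_ninth_of_le_on_scales hmono hC₁ (by linarith) hθ0 hθ1 hN hε hεN⟩

theorem stmt18 (d : ℕ) (hd : 10 ≤ d)
    (C₁ C₂ pstar ystar ε₁ : ℝ) (hC₁ : 1 ≤ C₁) (hC₂ : 0 < C₂)
    (hp : pstar ∈ Set.Ioo (0 : ℝ) 1) (hy : 0 < ystar) (hε₁ : ε₁ ∈ Set.Ioc (0 : ℝ) 1)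
    (F : ℝ → ℝ)
    (hF01 : ∀ x : ℝ, 0 < x → F x ∈ Set.Icc (0 : ℝ) 1)
    (hmono : ∀ x y : ℝ, 0 < x → x ≤ y → F x ≤ F y)
    (hseed : F ystar ≤ 1 - pstar)
    (hrec : ∀ ε : ℝ, 0 < ε → ε ≤ ε₁ →
      F ε ≤ F (C₁ * ε ^ ((1 : ℝ) / 3)) ^ (d - 1) + C₂ * ε ^ ((1 : ℝ) / 3)) :
    ∃ εstar : ℝ, εstar ∈ Set.Ioc (0 : ℝ) 1 ∧
      ∀ ε : ℝ, 0 < ε → ε ≤ εstar → F ε ≤ ε ^ ((31 : ℝ) / 301) := by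
  obtain ⟨K, ε₀, hK, hε₀, hF⟩ := exists_le_mul_rpow_one_ninth hd hC₁ hC₂.le hy hε₁.1 hF01 hmono
    (hseed.trans_lt (by linarith [hp.1])) hrec
  refine ⟨min (min ε₀ (K⁻¹ ^ ((1 : ℝ) / 9 - 31 / 301)⁻¹)) 1, ⟨by positivity, min_le_right _ _⟩,
    fun ε hε hεle => ?_⟩
  have hεle' := hεle.trans (min_le_left _ _)
  calc F ε ≤ K * ε ^ ((1 : ℝ) / 9) := hF ε hε (hεle'.trans (min_le_left _ _))
    _ ≤ ε ^ ((31 : ℝ) / 301) :=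
      mul_rpow_le_rpow_of_le hK (by norm_num) hε (hεle'.trans (min_le_right _ _))
end
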